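/- arXiv:1501.05798 — 3 statements merged into one kernel-verified Lean document; each statement's English description precedes it below -/
import Mathlib

section
/- For each n, let there be n_I initially infective vertices i = 1,…,n_I with degrees d_i^I, let X_{I,0} := Σ_i d_i^I and d_{I,max} := max_i d_i^I, and suppose ρ_n/β_n = O(1) and X_{I,0} → ∞. Let R_1,…,R_{n_I} be independent Exp(ρ_n) random variables, and conditionally on R_i, let Z_{0,i} have the Binomial(d_i^I, 1 − e^{−β_n R_i}) distribution (the number of half-edges at vertex i whose independent Exp(β_n) pairing time precedes R_i), with Z_{0,1},…,Z_{0,n_I} independent; set Z_0 := Σ_i Z_{0,i} and π_n := β_n/(β_n+ρ_n). Then: (i) if d_{I,max} = o(X_{I,0}), then Z_0 = π_n X_{I,0} (1 + o_p(1)); (ii) in general, lim_{δ→0} limsup_{n→∞} P(Z_0 ≤ δ X_{I,0}) = 0. -/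
/-!
Conditionally on its recovery time `R ∼ Exp(ρ)`, the red count at a vertex of degree `d` is
`Bin(d, 1 - e^{-βR})`; averaging the binomial mean over `R` gives `E Z = π d`, and `0 ≤ Z ≤ d`
gives `Var Z ≤ d E Z = π d²`. Part (i) is then Chebyshev's inequality for the independent sum,
whose variance is at most `π d_max X`.

For part (ii) split the vertices according to whether `δ² d ≥ 1`. If the low-degree vertices
carry half of the total degree `X`, Chebyshev's inequality for their sum, whose variance is at
most `X / δ²`, bounds `P(Z ≤ δ X)` by `O(1 / (δ² X))`. Otherwise a high-degree vertex has
`Z ≤ 4 δ d` with probability `O(δ)`: either `1 - e^{-βR} ≤ 8 δ`, which has probability at most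
`16 δ ρ / β`, or the binomial lower tail is at most `1 / (2 δ d) ≤ δ / 2`. On `Z ≤ δ X` the
high-degree vertices with such small counts carry half of the high-degree mass, so Markov's
inequality bounds `P(Z ≤ δ X)` by `O(δ)`.
-/

open MeasureTheory ProbabilityTheory Filter Topology Asymptotics Set
open scoped ENNReal

namespace bernsteinPolynomial

variable {d : ℕ} {x : ℝ}

lemma eval_nonneg (j : ℕ) (hx : x ∈ Icc (0 : ℝ) 1) :
    0 ≤ (bernsteinPolynomial ℝ d j).eval x := by
  have : 0 ≤ 1 - x := sub_nonneg.2 hx.2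
  simp only [bernsteinPolynomial, Polynomial.eval_mul, Polynomial.eval_pow, Polynomial.eval_sub,
    Polynomial.eval_one, Polynomial.eval_X, Polynomial.eval_natCast]
  have := hx.1
  positivity

lemma sum_eval (d : ℕ) (x : ℝ) :
    ∑ j ∈ Finset.range (d + 1), (bernsteinPolynomial ℝ d j).eval x = 1 := by
  simpa [Polynomial.eval_finsetSum] using congrArg (Polynomial.eval x) (sum ℝ d)

lemma sum_mul_eval (d : ℕ) (x : ℝ) :
    ∑ j ∈ Finset.range (d + 1), (j : ℝ) * (bernsteinPolynomial ℝ d j).eval x = d * x := by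
  simpa [Polynomial.eval_finsetSum] using congrArg (Polynomial.eval x) (sum_smul ℝ d)

lemma sum_sq_mul_eval (d : ℕ) (x : ℝ) :
    ∑ j ∈ Finset.range (d + 1), (d * x - j) ^ 2 * (bernsteinPolynomial ℝ d j).eval x =
      d * x * (1 - x) := by
  simpa [Polynomial.eval_finsetSum] using congrArg (Polynomial.eval x) (variance ℝ d)

lemma eval_le_one (j : ℕ) (hx : x ∈ Icc (0 : ℝ) 1) : (bernsteinPolynomial ℝ d j).eval x ≤ 1 := by
  by_cases hj : j ∈ Finset.range (d + 1)
  · rw [← sum_eval d x]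
    exact Finset.single_le_sum (fun k _ => eval_nonneg k hx) hj
  · rw [eq_zero_of_lt ℝ (by simpa using hj), Polynomial.eval_zero]
    exact zero_le_one

/-- Chebyshev's inequality for the lower tail of `Bin(d, x)`. -/
lemma sum_filter_eval_le (hx : x ∈ Icc (0 : ℝ) 1) {a : ℝ} (ha : a < d * x) :
    ∑ j ∈ (Finset.range (d + 1)).filter (fun j : ℕ => (j : ℝ) ≤ a),
        (bernsteinPolynomial ℝ d j).eval x ≤ d * x * (1 - x) / (d * x - a) ^ 2 := by
  have hgap : 0 < d * x - a := sub_pos.2 ha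
  rw [← sum_sq_mul_eval, le_div_iff₀ (by positivity), Finset.sum_mul]
  calc ∑ j ∈ (Finset.range (d + 1)).filter (fun j : ℕ => (j : ℝ) ≤ a),
        (bernsteinPolynomial ℝ d j).eval x * (d * x - a) ^ 2
      ≤ ∑ j ∈ (Finset.range (d + 1)).filter (fun j : ℕ => (j : ℝ) ≤ a),
        (d * x - j) ^ 2 * (bernsteinPolynomial ℝ d j).eval x := by
        refine Finset.sum_le_sum fun j hj => ?_
        have hj : (j : ℝ) ≤ a := (Finset.mem_filter.1 hj).2
        rw [mul_comm]
        gcongr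
        · exact eval_nonneg j hx
    _ ≤ _ := Finset.sum_le_sum_of_subset_of_nonneg (Finset.filter_subset _ _)
        fun j _ _ => mul_nonneg (sq_nonneg _) (eval_nonneg j hx)

lemma sum_filter_eval_le_one_div {δ : ℝ} (hδ : 0 < δ) (hd : 0 < d) (hx : x ∈ Icc (0 : ℝ) 1)
    (h8 : 8 * δ < x) :
    ∑ j ∈ (Finset.range (d + 1)).filter (fun j : ℕ => (j : ℝ) ≤ 4 * δ * d),
        (bernsteinPolynomial ℝ d j).eval x ≤ 1 / (2 * δ * d) := by
  have hd' : (0 : ℝ) < d := Nat.cast_pos.2 hd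
  have hgap : d * x / 2 ≤ d * x - 4 * δ * d := by nlinarith
  refine (sum_filter_eval_le hx (by nlinarith)).trans ?_
  have hx0 : 0 < d * x := by nlinarith
  calc d * x * (1 - x) / (d * x - 4 * δ * d) ^ 2 ≤ d * x / (d * x / 2) ^ 2 :=
        div_le_div₀ hx0.le (by nlinarith [hx.1]) (by positivity) (by gcongr)
    _ = 4 / (d * x) := by field_simp; ring
    _ ≤ 1 / (2 * δ * d) := by
        rw [div_le_div_iff₀ hx0 (by positivity)]
        nlinarith

end bernsteinPolynomial

lemma integral_natCast_eq_sum {Ω : Type*} [MeasurableSpace Ω] {P : Measure Ω} [IsFiniteMeasure P]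
    {Z : Ω → ℕ} (hZ : Measurable Z) {d : ℕ} (hle : ∀ ω, Z ω ≤ d) :
    ∫ ω, (Z ω : ℝ) ∂P = ∑ j ∈ Finset.range (d + 1), (j : ℝ) * P.real {ω | Z ω = j} := by
  have hms (j : ℕ) : MeasurableSet {ω | Z ω = j} := hZ (measurableSet_singleton j)
  have hZsum (ω : Ω) : (Z ω : ℝ) =
      ∑ j ∈ Finset.range (d + 1), {ω | Z ω = j}.indicator (fun _ => (j : ℝ)) ω := by
    rw [Finset.sum_eq_single_of_mem (Z ω) (Finset.mem_range.2 (Nat.lt_succ_of_le (hle ω)))]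
    · simp
    · intro j _ hj
      exact indicator_of_notMem (Ne.symm hj) _
  simp_rw [hZsum]
  rw [integral_finsetSum _ fun j _ => (integrable_const _).indicator (hms j)]
  simp only [integral_indicator_const _ (hms _), smul_eq_mul, mul_comm]

/-- `Z` is `Bin(d, p a)` with `a ∼ μ`; the Bernstein basis polynomials are the binomial weights. -/
structure IsMixedBinomial {Ω α : Type*} [MeasurableSpace Ω] [MeasurableSpace α]
    (P : Measure Ω) (Z : Ω → ℕ) (d : ℕ) (μ : Measure α) (p : α → ℝ) : Prop where
  measurable : Measurable p
  ae_mem_Icc : ∀ᵐ a ∂μ, p a ∈ Icc (0 : ℝ) 1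
  measure_eq : ∀ j : ℕ,
    P {ω | Z ω = j} = ENNReal.ofReal (∫ a, (bernsteinPolynomial ℝ d j).eval (p a) ∂μ)

namespace IsMixedBinomial

variable {Ω α : Type*} [MeasurableSpace Ω] [MeasurableSpace α] {P : Measure Ω} {Z : Ω → ℕ}
  {d : ℕ} {μ : Measure α} {p : α → ℝ}

lemma measureReal_eq (h : IsMixedBinomial P Z d μ p) (j : ℕ) :
    P.real {ω | Z ω = j} = ∫ a, (bernsteinPolynomial ℝ d j).eval (p a) ∂μ := by
  rw [measureReal_def, h.measure_eq, ENNReal.toReal_ofReal]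
  exact integral_nonneg_of_ae (h.ae_mem_Icc.mono fun a ha => bernsteinPolynomial.eval_nonneg j ha)

variable [IsProbabilityMeasure μ]

lemma integrable_eval (h : IsMixedBinomial P Z d μ p) (j : ℕ) :
    Integrable (fun a => (bernsteinPolynomial ℝ d j).eval (p a)) μ := by
  refine Integrable.of_bound
    ((Polynomial.continuous _).measurable.comp h.measurable).aestronglyMeasurable 1 ?_
  filter_upwards [h.ae_mem_Icc] with a ha
  rw [Real.norm_of_nonneg (bernsteinPolynomial.eval_nonneg j ha)]
  exact bernsteinPolynomial.eval_le_one j ha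

lemma measure_mem_finset (h : IsMixedBinomial P Z d μ p) (hZ : Measurable Z) (s : Finset ℕ) :
    P {ω | Z ω ∈ s} =
      ENNReal.ofReal (∫ a, ∑ j ∈ s, (bernsteinPolynomial ℝ d j).eval (p a) ∂μ) := by
  rw [show {ω | Z ω ∈ s} = Z ⁻¹' ↑s from rfl,
    ← sum_measure_preimage_singleton s fun j _ => hZ (measurableSet_singleton j),
    integral_finsetSum _ fun j _ => h.integrable_eval j, ENNReal.ofReal_sum_of_nonneg]
  · exact Finset.sum_congr rfl fun j _ => h.measure_eq j
  · exact fun j _ => integral_nonneg_of_ae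
      (h.ae_mem_Icc.mono fun a ha => bernsteinPolynomial.eval_nonneg j ha)

lemma integral_eq (h : IsMixedBinomial P Z d μ p) [IsFiniteMeasure P] (hZ : Measurable Z)
    (hle : ∀ ω, Z ω ≤ d) : ∫ ω, (Z ω : ℝ) ∂P = d * ∫ a, p a ∂μ := by
  rw [integral_natCast_eq_sum hZ hle, ← integral_const_mul]
  simp_rw [h.measureReal_eq, ← integral_const_mul, ← bernsteinPolynomial.sum_mul_eval d]
  exact (integral_finsetSum _ fun j _ => (h.integrable_eval j).const_mul _).symm

lemma measure_le_le (h : IsMixedBinomial P Z d μ p) (hZ : Measurable Z) (hle : ∀ ω, Z ω ≤ d)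
    {δ : ℝ} (hδ : 0 < δ) (hd : 0 < d) :
    P {ω | (Z ω : ℝ) ≤ 4 * δ * d} ≤
      ENNReal.ofReal (μ.real {a | p a ≤ 8 * δ} + 1 / (2 * δ * d)) := by
  set s := (Finset.range (d + 1)).filter (fun j : ℕ => (j : ℝ) ≤ 4 * δ * d)
  have hs : {ω | (Z ω : ℝ) ≤ 4 * δ * d} = {ω | Z ω ∈ s} := by
    ext ω
    exact ⟨fun hω => Finset.mem_filter.2 ⟨Finset.mem_range.2 (Nat.lt_succ_of_le (hle ω)), hω⟩,
      fun hω => (Finset.mem_filter.1 (show Z ω ∈ s from hω)).2⟩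
  have hsmall : MeasurableSet {a | p a ≤ 8 * δ} := measurableSet_le h.measurable measurable_const
  have hbound : ∫ a, ({a | p a ≤ 8 * δ}.indicator 1 a + 1 / (2 * δ * d)) ∂μ =
      μ.real {a | p a ≤ 8 * δ} + 1 / (2 * δ * d) := by
    rw [integral_add ((integrable_const 1).indicator hsmall) (integrable_const _),
      integral_indicator_one hsmall, integral_const, probReal_univ, one_smul]
  rw [hs, h.measure_mem_finset hZ, ← hbound]
  refine ENNReal.ofReal_le_ofReal (integral_mono_ae
    (integrable_finsetSum _ fun j _ => h.integrable_eval j)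
    (((integrable_const 1).indicator hsmall).add (integrable_const _)) ?_)
  filter_upwards [h.ae_mem_Icc] with a ha
  by_cases hpa : p a ≤ 8 * δ
  · have hsum : ∑ j ∈ s, (bernsteinPolynomial ℝ d j).eval (p a) ≤ 1 :=
      (bernsteinPolynomial.sum_eval d (p a)).le.trans' <|
        Finset.sum_le_sum_of_subset_of_nonneg (Finset.filter_subset _ _)
          fun j _ _ => bernsteinPolynomial.eval_nonneg j ha
    simp only [indicator_of_mem (show a ∈ {a | p a ≤ 8 * δ} from hpa), Pi.one_apply]
    have : 0 ≤ 1 / (2 * δ * d) := by positivity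
    linarith
  · simp only [indicator_of_notMem (show a ∉ {a | p a ≤ 8 * δ} from hpa), zero_add]
    exact bernsteinPolynomial.sum_filter_eval_le_one_div hδ hd ha (not_le.1 hpa)

end IsMixedBinomial

section Exponential

variable {ρ β : ℝ}

lemma integral_expMeasure (hρ : 0 < ρ) (g : ℝ → ℝ) :
    ∫ r, g r ∂expMeasure ρ = ∫ r in Ioi 0, ρ * Real.exp (-(ρ * r)) * g r := by
  rw [expMeasure, gammaMeasure, integral_withDensity_eq_integral_toReal_smul
      (show Measurable (gammaPDF 1 ρ) from (measurable_gammaPDFReal 1 ρ).ennreal_ofReal)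
      (ae_of_all _ fun _ => ENNReal.ofReal_lt_top),
    ← integral_indicator measurableSet_Ioi]
  refine integral_congr_ae ?_
  filter_upwards [(volume : Measure ℝ).ae_ne 0] with r hr
  by_cases hr0 : 0 < r
  · rw [indicator_of_mem (mem_Ioi.2 hr0), gammaPDF, gammaPDFReal, if_pos hr0.le,
      ENNReal.toReal_ofReal (by positivity)]
    simp
  · rw [indicator_of_notMem (mt mem_Ioi.1 hr0), gammaPDF, gammaPDFReal, if_neg (by grind),
      ENNReal.toReal_ofReal le_rfl, zero_smul]

lemma ae_pos_expMeasure (hρ : 0 < ρ) : ∀ᵐ r ∂expMeasure ρ, 0 < r := by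
  have := isProbabilityMeasure_expMeasure hρ
  rw [ae_iff]
  simp only [not_lt]
  change expMeasure ρ (Iic 0) = 0
  rw [← ofReal_cdf, cdf_expMeasure_eq hρ, if_pos le_rfl]
  simp

lemma integral_one_sub_exp_expMeasure (hρ : 0 < ρ) (hβ : 0 < β) :
    ∫ r, (1 - Real.exp (-(β * r))) ∂expMeasure ρ = β / (β + ρ) := by
  have := isProbabilityMeasure_expMeasure hρ
  have hint : Integrable (fun r => Real.exp (-(β * r))) (expMeasure ρ) := by
    refine Integrable.of_bound (by fun_prop) 1 ?_
    filter_upwards [ae_pos_expMeasure hρ] with r hr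
    rw [Real.norm_of_nonneg (Real.exp_pos _).le, Real.exp_le_one_iff]
    nlinarith
  have hlaplace : ∫ r, Real.exp (-(β * r)) ∂expMeasure ρ = ρ / (β + ρ) := by
    rw [integral_expMeasure hρ]
    simp_rw [mul_assoc, ← Real.exp_add, show ∀ r, -(ρ * r) + -(β * r) = (-(β + ρ)) * r from
      fun r => by ring]
    rw [integral_const_mul, integral_exp_mul_Ioi (by linarith) 0]
    field_simp
    simp
  rw [integral_sub (integrable_const 1) hint, integral_const, probReal_univ, one_smul, hlaplace]
  field_simp
  ring

lemma measureReal_one_sub_exp_le (hρ : 0 < ρ) (hβ : 0 < β) {t : ℝ} (ht0 : 0 ≤ t)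
    (ht : t ≤ 1 / 2) :
    (expMeasure ρ).real {r | 1 - Real.exp (-(β * r)) ≤ t} ≤ ρ / β * (2 * t) := by
  have := isProbabilityMeasure_expMeasure hρ
  have hsub : {r | 1 - Real.exp (-(β * r)) ≤ t} ⊆ Iic (2 * t / β) := by
    intro r hr
    by_contra hlt
    have hβr : 2 * t < β * r := by rwa [mem_Iic, not_le, div_lt_iff₀' hβ] at hlt
    have hexp : Real.exp (-(β * r)) * Real.exp (β * r) = 1 := by
      rw [← Real.exp_add, neg_add_cancel, Real.exp_zero]
    nlinarith [Real.add_one_le_exp (β * r), Real.exp_pos (-(β * r)),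
      show 1 - Real.exp (-(β * r)) ≤ t from hr]
  calc (expMeasure ρ).real {r | 1 - Real.exp (-(β * r)) ≤ t}
      ≤ (expMeasure ρ).real (Iic (2 * t / β)) := measureReal_mono hsub
    _ = 1 - Real.exp (-(ρ * (2 * t / β))) := by
        rw [measureReal_def, ← ofReal_cdf, ENNReal.toReal_ofReal (cdf_nonneg _ _),
          cdf_expMeasure_eq hρ, if_pos (by positivity)]
    _ ≤ ρ * (2 * t / β) := by linarith [Real.add_one_le_exp (-(ρ * (2 * t / β)))]
    _ = ρ / β * (2 * t) := by ring

end Exponential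

lemma isMixedBinomial_expMeasure {Ω : Type*} [MeasurableSpace Ω] {P : Measure Ω} {Z : Ω → ℕ}
    {d : ℕ} {ρ β : ℝ} (hρ : 0 < ρ) (hβ : 0 < β)
    (hlaw : ∀ j : ℕ, P {ω | Z ω = j} = ENNReal.ofReal (∫ r in Ioi 0, ρ * Real.exp (-(ρ * r)) *
      (d.choose j * (1 - Real.exp (-(β * r))) ^ j * Real.exp (-(β * r)) ^ (d - j)))) :
    IsMixedBinomial P Z d (expMeasure ρ) (fun r => 1 - Real.exp (-(β * r))) where
  measurable := by fun_prop
  ae_mem_Icc := by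
    filter_upwards [ae_pos_expMeasure hρ] with r hr
    have : Real.exp (-(β * r)) ≤ 1 := Real.exp_le_one_iff.2 (by nlinarith)
    exact ⟨by linarith, by linarith [Real.exp_pos (-(β * r))]⟩
  measure_eq j := by
    simp [hlaw, integral_expMeasure hρ, bernsteinPolynomial]

/-- The law of the number of red half-edges at an initially infective vertex of degree `d`:
`Bin(d, 1 - e^{-βR})` with `R ∼ Exp(ρ)`, and `d` almost surely when `ρ = 0`. -/
def IsRedHalfEdgeCount {Ω : Type*} [MeasurableSpace Ω] (P : Measure Ω) (Z : Ω → ℕ) (d : ℕ)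
    (ρ β : ℝ) : Prop :=
  ∀ j : ℕ,
    (ρ ≠ 0 → P {ω | Z ω = j} = ENNReal.ofReal (∫ r in Ioi 0, ρ * Real.exp (-(ρ * r)) *
      (d.choose j * (1 - Real.exp (-(β * r))) ^ j * Real.exp (-(β * r)) ^ (d - j)))) ∧
    (ρ = 0 → P {ω | Z ω = d} = 1)

namespace IsRedHalfEdgeCount

variable {Ω : Type*} [MeasurableSpace Ω] {P : Measure Ω} [IsProbabilityMeasure P] {Z : Ω → ℕ}
  {d : ℕ} {ρ β : ℝ}

lemma ae_eq_of_rate_eq_zero (h : IsRedHalfEdgeCount P Z d ρ β) (hZ : Measurable Z) (h0 : ρ = 0) :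
    ∀ᵐ ω ∂P, Z ω = d := by
  rw [ae_iff_measure_eq (show MeasurableSet {ω | Z ω = d} from
    hZ (measurableSet_singleton d)).nullMeasurableSet, measure_univ]
  exact (h d).2 h0

lemma integral_eq (h : IsRedHalfEdgeCount P Z d ρ β) (hρ : 0 ≤ ρ) (hβ : 0 < β)
    (hZ : Measurable Z) (hle : ∀ ω, Z ω ≤ d) :
    ∫ ω, (Z ω : ℝ) ∂P = β / (β + ρ) * d := by
  rcases hρ.eq_or_lt with h0 | hpos
  · rw [integral_congr_ae (g := fun _ => (d : ℝ))
        ((h.ae_eq_of_rate_eq_zero hZ h0.symm).mono fun ω hω => by simp only [hω]),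
      integral_const, probReal_univ, one_smul, ← h0, add_zero, div_self hβ.ne', one_mul]
  · have hmix := isMixedBinomial_expMeasure hpos hβ fun j => (h j).1 hpos.ne'
    have := isProbabilityMeasure_expMeasure hpos
    rw [hmix.integral_eq hZ hle, integral_one_sub_exp_expMeasure hpos hβ, mul_comm]

lemma measure_le_le (h : IsRedHalfEdgeCount P Z d ρ β) (hρ : 0 ≤ ρ) (hβ : 0 < β)
    (hZ : Measurable Z) (hle : ∀ ω, Z ω ≤ d) {δ : ℝ} (hδ : 0 < δ) (hδ1 : δ ≤ 1 / 16)
    (hd : 1 ≤ δ ^ 2 * d) :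
    P {ω | (Z ω : ℝ) ≤ 4 * δ * d} ≤ ENNReal.ofReal (ρ / β * (16 * δ) + δ / 2) := by
  have hd0 : (0 : ℝ) < d := by nlinarith
  rcases hρ.eq_or_lt with h0 | hpos
  · refine le_of_eq_of_le ?_ zero_le
    refine measure_mono_null (fun ω hω => ?_) (ae_iff.1 (h.ae_eq_of_rate_eq_zero hZ h0.symm))
    intro hZd
    have hω : (Z ω : ℝ) ≤ 4 * δ * d := hω
    rw [hZd] at hω
    nlinarith
  · have hmix := isMixedBinomial_expMeasure hpos hβ fun j => (h j).1 hpos.ne'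
    have := isProbabilityMeasure_expMeasure hpos
    refine (hmix.measure_le_le hZ hle hδ (Nat.cast_pos.1 hd0)).trans (ENNReal.ofReal_le_ofReal ?_)
    have hred := measureReal_one_sub_exp_le hpos hβ (t := 8 * δ) (by positivity) (by linarith)
    have hbin : 1 / (2 * δ * d) ≤ δ / 2 := by
      rw [div_le_div_iff₀ (by positivity) two_pos]
      nlinarith
    linarith

end IsRedHalfEdgeCount

section IndependentCounts

variable {Ω : Type*} [MeasurableSpace Ω] {P : Measure Ω} [IsProbabilityMeasure P]

lemma memLp_two_natCast_of_le {Z : Ω → ℕ} (hZ : Measurable Z) {d : ℕ} (hle : ∀ ω, Z ω ≤ d) :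
    MemLp (fun ω => (Z ω : ℝ)) 2 P :=
  (memLp_top_of_bound (by fun_prop) d (ae_of_all _ fun ω => by
    simpa using hle ω)).mono_exponent le_top

lemma variance_le_mul_integral {Y : Ω → ℝ} (hY : AEStronglyMeasurable Y P) {c : ℝ}
    (h0 : ∀ ω, 0 ≤ Y ω) (hc : ∀ ω, Y ω ≤ c) : variance Y P ≤ c * ∫ ω, Y ω ∂P := by
  have hint : Integrable Y P :=
    Integrable.of_bound hY c (ae_of_all _ fun ω => by rw [Real.norm_of_nonneg (h0 ω)]; exact hc ω)
  rw [← integral_const_mul]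
  refine (variance_le_expectation_sq hY).trans (integral_mono_of_nonneg
    (ae_of_all _ fun ω => sq_nonneg (Y ω)) (hint.const_mul c) (ae_of_all _ fun ω => ?_))
  simp only [Pi.pow_apply, sq]
  exact mul_le_mul_of_nonneg_right (hc ω) (h0 ω)

lemma measure_le_le_variance_div_sq {W : Ω → ℝ} (hW : MemLp W 2 P) {t a : ℝ} (ha : 0 < a)
    (h : t + a ≤ ∫ ω, W ω ∂P) :
    P {ω | W ω ≤ t} ≤ ENNReal.ofReal (variance W P / a ^ 2) := by
  refine (measure_mono fun ω (hω : W ω ≤ t) => ?_).trans (meas_ge_le_variance_div_sq hW ha)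
  show a ≤ |W ω - ∫ ω, W ω ∂P|
  rw [abs_sub_comm]
  exact (by linarith : a ≤ _).trans (le_abs_self _)

variable {ι : Type*} {Z : ι → Ω → ℕ} {d : ι → ℕ} {q : ℝ}

lemma integral_sum_natCast_eq (hZ : ∀ i, Measurable (Z i)) (hle : ∀ i ω, Z i ω ≤ d i)
    (hmean : ∀ i, ∫ ω, (Z i ω : ℝ) ∂P = q * d i) (s : Finset ι) :
    ∫ ω, ∑ i ∈ s, (Z i ω : ℝ) ∂P = q * ∑ i ∈ s, (d i : ℝ) := by
  rw [integral_finsetSum _ fun i _ => (memLp_two_natCast_of_le (hZ i) (hle i)).integrable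
    one_le_two, Finset.mul_sum]
  exact Finset.sum_congr rfl fun i _ => hmean i

lemma variance_sum_natCast_le (hZ : ∀ i, Measurable (Z i)) (hle : ∀ i ω, Z i ω ≤ d i)
    (hmean : ∀ i, ∫ ω, (Z i ω : ℝ) ∂P = q * d i) (hind : iIndepFun Z P) (s : Finset ι) :
    variance (fun ω => ∑ i ∈ s, (Z i ω : ℝ)) P ≤ q * ∑ i ∈ s, (d i : ℝ) ^ 2 := by
  have hvar := IndepFun.variance_sum (μ := P) (s := s) (X := fun i ω => (Z i ω : ℝ))
    (fun i _ => memLp_two_natCast_of_le (hZ i) (hle i))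
    (fun i _ j _ hij => (hind.indepFun hij).comp measurable_from_top measurable_from_top)
  rw [show (fun ω => ∑ i ∈ s, (Z i ω : ℝ)) = ∑ i ∈ s, fun ω => (Z i ω : ℝ) by ext; simp, hvar,
    Finset.mul_sum]
  refine Finset.sum_le_sum fun i _ => ?_
  calc variance (fun ω => (Z i ω : ℝ)) P ≤ d i * ∫ ω, (Z i ω : ℝ) ∂P :=
        variance_le_mul_integral (by fun_prop) (fun ω => Nat.cast_nonneg _)
          fun ω => Nat.cast_le.2 (hle i ω)
    _ = q * (d i : ℝ) ^ 2 := by rw [hmean]; ring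

lemma measure_sum_le_half_mul_le (hZ : ∀ i, Measurable (Z i)) (s : Finset ι) {a η : ℝ}
    (ha : 0 < a) (hη : 0 ≤ η) (hs : 0 < ∑ i ∈ s, (d i : ℝ))
    (htail : ∀ i ∈ s, P {ω | (Z i ω : ℝ) ≤ a * d i} ≤ ENNReal.ofReal η) :
    P {ω | ∑ i ∈ s, (Z i ω : ℝ) ≤ a / 2 * ∑ i ∈ s, (d i : ℝ)} ≤ ENNReal.ofReal (2 * η) := by
  set D := ∑ i ∈ s, (d i : ℝ)
  have hbad (i : ι) : MeasurableSet {ω | (Z i ω : ℝ) ≤ a * d i} :=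
    measurableSet_le (by fun_prop) measurable_const
  set G : Ω → ℝ := fun ω => ∑ i ∈ s, {ω | (Z i ω : ℝ) ≤ a * d i}.indicator (fun _ => (d i : ℝ)) ω
  have hGint : Integrable G P :=
    integrable_finsetSum _ fun i _ => (integrable_const _).indicator (hbad i)
  have hEG : ∫ ω, G ω ∂P ≤ η * D := by
    rw [integral_finsetSum _ fun i _ => (integrable_const _).indicator (hbad i), Finset.mul_sum]
    refine Finset.sum_le_sum fun i hi => ?_
    rw [integral_indicator_const _ (hbad i), smul_eq_mul]
    exact mul_le_mul_of_nonneg_right (ENNReal.toReal_le_of_le_ofReal hη (htail i hi))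
      (Nat.cast_nonneg _)
  have hsub : {ω | ∑ i ∈ s, (Z i ω : ℝ) ≤ a / 2 * D} ⊆ {ω | D / 2 ≤ G ω} := by
    intro ω (hω : ∑ i ∈ s, (Z i ω : ℝ) ≤ a / 2 * D)
    have hpt (i : ι) :
        a * d i ≤ Z i ω + a * {ω | (Z i ω : ℝ) ≤ a * d i}.indicator (fun _ => (d i : ℝ)) ω := by
      by_cases hi : ω ∈ {ω | (Z i ω : ℝ) ≤ a * d i}
      · rw [indicator_of_mem hi]
        exact le_add_of_nonneg_left (Nat.cast_nonneg _)
      · rw [indicator_of_notMem hi, mul_zero, add_zero]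
        exact (not_le.1 hi).le
    have := Finset.sum_le_sum fun i (_ : i ∈ s) => hpt i
    rw [Finset.sum_add_distrib, ← Finset.mul_sum, ← Finset.mul_sum] at this
    show D / 2 ≤ G ω
    nlinarith
  have hGnn : 0 ≤ᵐ[P] G := ae_of_all _ fun ω =>
    Finset.sum_nonneg fun i _ => indicator_nonneg (fun _ _ => Nat.cast_nonneg _) ω
  have hmarkov := mul_meas_ge_le_integral_of_nonneg hGnn hGint (D / 2)
  refine (measure_mono hsub).trans ((ENNReal.le_ofReal_iff_toReal_le (measure_ne_top _ _)
    (by positivity)).2 ?_)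
  change P.real {ω | D / 2 ≤ G ω} ≤ 2 * η
  nlinarith

variable [Fintype ι]

lemma measure_abs_sum_div_sub_one_ge_le (hZ : ∀ i, Measurable (Z i))
    (hle : ∀ i ω, Z i ω ≤ d i) (hmean : ∀ i, ∫ ω, (Z i ω : ℝ) ∂P = q * d i)
    (hind : iIndepFun Z P) (hq : 0 < q) (hX : 0 < ∑ i, (d i : ℝ)) {D : ℕ} (hD : ∀ i, d i ≤ D)
    {ε : ℝ} (hε : 0 < ε) :
    P {ω | ε ≤ |(∑ i, (Z i ω : ℝ)) / (q * ∑ i, (d i : ℝ)) - 1|} ≤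
      ENNReal.ofReal (D / (ε ^ 2 * q * ∑ i, (d i : ℝ))) := by
  set X := ∑ i, (d i : ℝ)
  have hqX : 0 < q * X := mul_pos hq hX
  have hS : MemLp (fun ω => ∑ i, (Z i ω : ℝ)) 2 P :=
    memLp_finsetSum _ fun i _ => memLp_two_natCast_of_le (hZ i) (hle i)
  have hES := integral_sum_natCast_eq hZ hle hmean Finset.univ
  have hvar : variance (fun ω => ∑ i, (Z i ω : ℝ)) P ≤ q * (D * X) := by
    refine (variance_sum_natCast_le hZ hle hmean hind Finset.univ).trans
      (mul_le_mul_of_nonneg_left ?_ hq.le)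
    rw [Finset.mul_sum]
    gcongr with i
    rw [sq]
    gcongr
    exact_mod_cast hD i
  have hevent : {ω | ε ≤ |(∑ i, (Z i ω : ℝ)) / (q * X) - 1|} =
      {ω | ε * (q * X) ≤ |(∑ i, (Z i ω : ℝ)) - ∫ ω', ∑ i, (Z i ω' : ℝ) ∂P|} := by
    ext ω
    rw [mem_ofPred_eq, mem_ofPred_eq, hES, div_sub_one hqX.ne', abs_div, abs_of_pos hqX,
      le_div_iff₀ hqX]
  rw [hevent]
  refine (meas_ge_le_variance_div_sq hS (by positivity)).trans (ENNReal.ofReal_le_ofReal ?_)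
  calc variance (fun ω => ∑ i, (Z i ω : ℝ)) P / (ε * (q * X)) ^ 2
      ≤ q * (D * X) / (ε * (q * X)) ^ 2 := by gcongr
    _ = D / (ε ^ 2 * q * X) := by field_simp

lemma measure_sum_le_le_of_degree_le (hZ : ∀ i, Measurable (Z i))
    (hle : ∀ i ω, Z i ω ≤ d i) (hmean : ∀ i, ∫ ω, (Z i ω : ℝ) ∂P = q * d i)
    (hind : iIndepFun Z P) {c δ : ℝ} (hδ : 0 < δ) (hcq : c ≤ q) (hq1 : q ≤ 1) (hδc : δ ≤ c / 4)
    (hX : 0 < ∑ i, (d i : ℝ)) (s : Finset ι) (hs : (∑ i, (d i : ℝ)) / 2 ≤ ∑ i ∈ s, (d i : ℝ))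
    (hsmall : ∀ i ∈ s, δ ^ 2 * d i ≤ 1) :
    P {ω | ∑ i, (Z i ω : ℝ) ≤ δ * ∑ i, (d i : ℝ)} ≤
      ENNReal.ofReal (16 / (δ ^ 2 * c ^ 2 * ∑ i, (d i : ℝ))) := by
  set X := ∑ i, (d i : ℝ)
  have hc : 0 < c := by linarith
  have hW : MemLp (fun ω => ∑ i ∈ s, (Z i ω : ℝ)) 2 P :=
    memLp_finsetSum _ fun i _ => memLp_two_natCast_of_le (hZ i) (hle i)
  have hsX : ∑ i ∈ s, (d i : ℝ) ≤ X :=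
    Finset.sum_le_univ_sum_of_nonneg fun i => Nat.cast_nonneg _
  have hvar : variance (fun ω => ∑ i ∈ s, (Z i ω : ℝ)) P ≤ X / δ ^ 2 := by
    refine (variance_sum_natCast_le hZ hle hmean hind s).trans ?_
    calc q * ∑ i ∈ s, (d i : ℝ) ^ 2 ≤ q * ∑ i ∈ s, (d i : ℝ) / δ ^ 2 := by
          refine mul_le_mul_of_nonneg_left (Finset.sum_le_sum fun i hi => ?_) (hc.le.trans hcq)
          rw [le_div_iff₀ (by positivity)]
          nlinarith [hsmall i hi, (Nat.cast_nonneg (d i) : (0 : ℝ) ≤ d i)]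
      _ ≤ 1 * ∑ i ∈ s, (d i : ℝ) / δ ^ 2 := by gcongr
      _ ≤ X / δ ^ 2 := by rw [one_mul, ← Finset.sum_div]; gcongr
  have hsub : {ω | ∑ i, (Z i ω : ℝ) ≤ δ * X} ⊆ {ω | ∑ i ∈ s, (Z i ω : ℝ) ≤ δ * X} :=
    fun ω (hω : ∑ i, (Z i ω : ℝ) ≤ δ * X) => (Finset.sum_le_univ_sum_of_nonneg
      fun i => Nat.cast_nonneg _).trans hω
  have hgap : δ * X + c * X / 4 ≤ ∫ ω, ∑ i ∈ s, (Z i ω : ℝ) ∂P := by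
    rw [integral_sum_natCast_eq hZ hle hmean s]
    nlinarith
  refine (measure_mono hsub).trans ((measure_le_le_variance_div_sq hW (by positivity) hgap).trans
    (ENNReal.ofReal_le_ofReal ?_))
  calc variance (fun ω => ∑ i ∈ s, (Z i ω : ℝ)) P / (c * X / 4) ^ 2
      ≤ X / δ ^ 2 / (c * X / 4) ^ 2 := by gcongr
    _ = 16 / (δ ^ 2 * c ^ 2 * X) := by field_simp; ring

lemma measure_sum_le_le (hZ : ∀ i, Measurable (Z i))
    (hle : ∀ i ω, Z i ω ≤ d i) (hmean : ∀ i, ∫ ω, (Z i ω : ℝ) ∂P = q * d i)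
    (hind : iIndepFun Z P) {c δ η : ℝ} (hδ : 0 < δ) (hcq : c ≤ q) (hq1 : q ≤ 1)
    (hδc : δ ≤ c / 4) (hη : 0 ≤ η) (hX : 0 < ∑ i, (d i : ℝ))
    (htail : ∀ i, 1 ≤ δ ^ 2 * d i → P {ω | (Z i ω : ℝ) ≤ 4 * δ * d i} ≤ ENNReal.ofReal η) :
    P {ω | ∑ i, (Z i ω : ℝ) ≤ δ * ∑ i, (d i : ℝ)} ≤
      ENNReal.ofReal (16 / (δ ^ 2 * c ^ 2 * ∑ i, (d i : ℝ)) + 2 * η) := by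
  classical
  set X := ∑ i, (d i : ℝ)
  set T := Finset.univ.filter fun i => 1 ≤ δ ^ 2 * d i
  have hsplit : ∑ i ∈ T, (d i : ℝ) + ∑ i ∈ Tᶜ, (d i : ℝ) = X := Finset.sum_add_sum_compl T _
  by_cases hsmall : X / 2 ≤ ∑ i ∈ Tᶜ, (d i : ℝ)
  · refine (measure_sum_le_le_of_degree_le hZ hle hmean hind hδ hcq hq1 hδc hX Tᶜ hsmall
      fun i hi => ?_).trans (ENNReal.ofReal_le_ofReal (by linarith))
    simp only [T, Finset.mem_compl, Finset.mem_filter, Finset.mem_univ, true_and, not_le] at hi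
    exact hi.le
  · have hlarge : X / 2 < ∑ i ∈ T, (d i : ℝ) := by linarith
    have hsub : {ω | ∑ i, (Z i ω : ℝ) ≤ δ * X} ⊆
        {ω | ∑ i ∈ T, (Z i ω : ℝ) ≤ 4 * δ / 2 * ∑ i ∈ T, (d i : ℝ)} := by
      intro ω (hω : ∑ i, (Z i ω : ℝ) ≤ δ * X)
      have : ∑ i ∈ T, (Z i ω : ℝ) ≤ ∑ i, (Z i ω : ℝ) :=
        Finset.sum_le_univ_sum_of_nonneg fun i => Nat.cast_nonneg _
      show ∑ i ∈ T, (Z i ω : ℝ) ≤ 4 * δ / 2 * ∑ i ∈ T, (d i : ℝ)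
      nlinarith
    refine (measure_mono hsub).trans ((measure_sum_le_half_mul_le hZ T (by positivity) hη
      (by linarith) fun i hi => htail i (Finset.mem_filter.1 hi).2).trans
      (ENNReal.ofReal_le_ofReal (le_add_of_nonneg_left (by positivity))))

end IndependentCounts

lemma one_div_one_add_le_div_add {ρ β C : ℝ} (hρ : 0 ≤ ρ) (hβ : 0 < β) (hC : ρ / β ≤ C) :
    1 / (1 + C) ≤ β / (β + ρ) := by
  have hC0 : 0 ≤ C := (div_nonneg hρ hβ.le).trans hC
  rw [div_le_div_iff₀ (by positivity) (by positivity)]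
  nlinarith [(div_le_iff₀ hβ).1 hC]

section RedHalfEdges

variable {Ω : Type*} [MeasurableSpace Ω] {P : Measure Ω} [IsProbabilityMeasure P]
  {ι : Type*} [Fintype ι] {Z : ι → Ω → ℕ} {d : ι → ℕ} {ρ β : ℝ}

lemma measure_abs_sum_div_sub_one_ge_le_of_red (hρ : 0 ≤ ρ) (hβ : 0 < β)
    (hZ : ∀ i, Measurable (Z i)) (hle : ∀ i ω, Z i ω ≤ d i)
    (hred : ∀ i, IsRedHalfEdgeCount P (Z i) (d i) ρ β) (hind : iIndepFun Z P)
    (hX : 0 < ∑ i, (d i : ℝ)) {C : ℝ} (hC : ρ / β ≤ C) {ε : ℝ} (hε : 0 < ε) :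
    P {ω | ε ≤ |(∑ i, (Z i ω : ℝ)) / (β / (β + ρ) * ∑ i, (d i : ℝ)) - 1|} ≤
      ENNReal.ofReal ((1 + C) / ε ^ 2 * (Finset.univ.sup d / ∑ i, (d i : ℝ))) := by
  have hπ : 0 < β / (β + ρ) := by positivity
  refine (measure_abs_sum_div_sub_one_ge_le hZ hle
    (fun i => (hred i).integral_eq hρ hβ (hZ i) (hle i)) hind hπ hX
    (fun i => Finset.le_sup (Finset.mem_univ i)) hε).trans (ENNReal.ofReal_le_ofReal ?_)
  have hC1 : 0 < 1 + C := by linarith [(div_nonneg hρ hβ.le).trans hC]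
  have hinv : 1 / (β / (β + ρ)) ≤ 1 + C :=
    (one_div_le hπ hC1).2 (one_div_one_add_le_div_add hρ hβ hC)
  calc ((Finset.univ.sup d : ℕ) : ℝ) / (ε ^ 2 * (β / (β + ρ)) * ∑ i, (d i : ℝ))
      = 1 / (β / (β + ρ)) / ε ^ 2 * (Finset.univ.sup d / ∑ i, (d i : ℝ)) := by field_simp
    _ ≤ (1 + C) / ε ^ 2 * (Finset.univ.sup d / ∑ i, (d i : ℝ)) := by gcongr

lemma measure_sum_le_le_of_red (hρ : 0 ≤ ρ) (hβ : 0 < β)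
    (hZ : ∀ i, Measurable (Z i)) (hle : ∀ i ω, Z i ω ≤ d i)
    (hred : ∀ i, IsRedHalfEdgeCount P (Z i) (d i) ρ β) (hind : iIndepFun Z P)
    (hX : 0 < ∑ i, (d i : ℝ)) {C δ : ℝ} (hC : ρ / β ≤ C) (hδ : 0 < δ)
    (hδC : δ ≤ 1 / (4 * (1 + C))) (hδ16 : δ ≤ 1 / 16) :
    P {ω | ∑ i, (Z i ω : ℝ) ≤ δ * ∑ i, (d i : ℝ)} ≤
      ENNReal.ofReal (16 * (1 + C) ^ 2 / δ ^ 2 / ∑ i, (d i : ℝ) + (32 * C + 1) * δ) := by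
  have hC0 : 0 ≤ C := (div_nonneg hρ hβ.le).trans hC
  have hbound := measure_sum_le_le hZ hle (fun i => (hred i).integral_eq hρ hβ (hZ i) (hle i))
    hind hδ (one_div_one_add_le_div_add hρ hβ hC) (div_le_one_of_le₀ (by linarith) (by positivity))
    (by rwa [div_div, mul_comm]) (η := 16 * C * δ + δ / 2) (by positivity) hX fun i hi =>
      ((hred i).measure_le_le hρ hβ (hZ i) (hle i) hδ hδ16 hi).trans
        (ENNReal.ofReal_le_ofReal (by nlinarith [mul_le_mul_of_nonneg_right hC hδ.le]))
  convert hbound using 2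
  field_simp
  ring

end RedHalfEdges

lemma tendsto_nhds_zero_of_le_ofReal {α : Type*} {l : Filter α} {f : α → ℝ≥0∞} {g : α → ℝ}
    (hg : Tendsto g l (𝓝 0)) (h : ∀ᶠ a in l, f a ≤ ENNReal.ofReal (g a)) :
    Tendsto f l (𝓝 0) :=
  tendsto_of_tendsto_of_tendsto_of_le_of_le' tendsto_const_nhds
    (by simpa using ENNReal.tendsto_ofReal hg) (Eventually.of_forall fun _ => zero_le) h

/-- Lemma 4.1: with `Z_{0,i}` the number of red half-edges at the initially
infective vertex `i` (i.e. a mixed binomial `Bin(d_i^I, 1 − e^{−β_n R_i})`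
with `R_i ~ Exp(ρ_n)` independent), `Z_0 = Σ_i Z_{0,i}` and
`π_n = β_n/(β_n+ρ_n)`:
(i) if `d_{I,max} = o(X_{I,0})` then `Z_0 = π_n X_{I,0}(1 + o_p(1))`;
(ii) in general, `lim_{δ→0} limsup_n P(Z_0 ≤ δ X_{I,0}) = 0`. -/
theorem red_halfedges_initial_count
    -- rates, with ρ_n/β_n = O(1)
    (ρ β : ℕ → ℝ) (hρ : ∀ n, 0 ≤ ρ n) (hβ : ∀ n, 0 < β n)
    (hratio : (fun n => ρ n / β n) =O[atTop] fun _ => (1 : ℝ))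
    (π : ℕ → ℝ) (hπ : ∀ n, π n = β n / (β n + ρ n))
    -- the initially infective vertices and their degrees
    (nI : ℕ → ℕ) (dI : ∀ n, Fin (nI n) → ℕ)
    -- X_{I,0} = Σ_i d_i^I → ∞
    (XI0 : ℕ → ℕ) (hXI0 : ∀ n, XI0 n = ∑ i, dI n i)
    (hXI0top : Tendsto (fun n => XI0 n) atTop atTop)
    -- d_{I,max}
    (dImax : ℕ → ℕ) (hdImax : ∀ n, dImax n = Finset.univ.sup (dI n))
    -- the probability spaces and the random variables Z_{0,i}
    (Ω : ℕ → Type) [∀ n, MeasurableSpace (Ω n)]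
    (P : ∀ n, Measure (Ω n)) (hP : ∀ n, IsProbabilityMeasure (P n))
    (Z0i : ∀ n, Fin (nI n) → Ω n → ℕ)
    (hmeas : ∀ n i, Measurable (Z0i n i))
    (hle : ∀ n i ω, Z0i n i ω ≤ dI n i)
    -- Z_{0,i} has the mixed binomial distribution Bin(d_i^I, 1 − e^{−β_n R}),
    -- R ~ Exp(ρ_n); if ρ_n = 0 then all half-edges are red
    (hlaw : ∀ n (i : Fin (nI n)) (j : ℕ),
      (ρ n ≠ 0 → P n {ω | Z0i n i ω = j} = ENNReal.ofReal
        (∫ r in Set.Ioi (0 : ℝ), ρ n * Real.exp (-(ρ n * r)) *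
          ((dI n i).choose j * (1 - Real.exp (-(β n * r))) ^ j *
            Real.exp (-(β n * r)) ^ (dI n i - j)))) ∧
      (ρ n = 0 → P n {ω | Z0i n i ω = dI n i} = 1))
    -- the Z_{0,i}, i = 1,…,n_I, are independent
    (hindep : ∀ n, ProbabilityTheory.iIndepFun
      (Z0i n) (P n)) :
    -- (i)
    (((fun n => (dImax n : ℝ)) =o[atTop] fun n => (XI0 n : ℝ)) →
      ∀ ε : ℝ, 0 < ε →
        Tendsto (fun n => P n {ω |
            ε ≤ |(∑ i, (Z0i n i ω : ℝ)) / (π n * (XI0 n : ℝ)) - 1|})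
          atTop (𝓝 0)) ∧
    -- (ii)
    Tendsto (fun δ : ℝ =>
        Filter.limsup (fun n => P n {ω | (∑ i, (Z0i n i ω : ℝ)) ≤ δ * (XI0 n : ℝ)}) atTop)
      (𝓝[>] (0 : ℝ)) (𝓝 (0 : ℝ≥0∞)) := by
  obtain rfl : π = fun n => β n / (β n + ρ n) := funext hπ
  obtain rfl : dImax = fun n => Finset.univ.sup (dI n) := funext hdImax
  obtain ⟨C, hC0, hC⟩ : ∃ C ≥ 0, ∀ᶠ n in atTop, ρ n / β n ≤ C := by
    obtain ⟨C, hC0, hCw⟩ := hratio.exists_nonneg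
    exact ⟨C, hC0, hCw.bound.mono fun n hn => by simpa using (le_abs_self _).trans hn⟩
  have hX (n : ℕ) : (XI0 n : ℝ) = ∑ i, (dI n i : ℝ) := by rw [hXI0]; push_cast; rfl
  have hXtop : Tendsto (fun n => (XI0 n : ℝ)) atTop atTop :=
    tendsto_natCast_atTop_atTop.comp hXI0top
  refine ⟨fun ho ε hε => ?_, ?_⟩
  · refine tendsto_nhds_zero_of_le_ofReal
      (by simpa using ho.tendsto_div_nhds_zero.const_mul ((1 + C) / ε ^ 2)) ?_
    filter_upwards [hC, hXtop.eventually_gt_atTop 0] with n hn hXn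
    have := hP n
    have hbound := measure_abs_sum_div_sub_one_ge_le_of_red (hρ n) (hβ n) (hmeas n) (hle n)
      (fun i => hlaw n i) (hindep n) (hX n ▸ hXn) hn hε
    rwa [← hX n] at hbound
  · refine tendsto_nhds_zero_of_le_ofReal (g := fun δ => (32 * C + 2) * δ)
      (((continuous_const_mul _).tendsto' 0 0 (mul_zero _)).mono_left nhdsWithin_le_nhds) ?_
    filter_upwards [Ioo_mem_nhdsGT (show 0 < min (1 / (4 * (1 + C))) (1 / 16) by positivity)]
      with δ ⟨hδ, hδmin⟩
    have hsmall : ∀ᶠ n in atTop, 16 * (1 + C) ^ 2 / δ ^ 2 / XI0 n ≤ δ :=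
      (tendsto_const_nhds.div_atTop hXtop).eventually (eventually_le_nhds hδ)
    refine limsup_le_of_le (by isBoundedDefault) ?_
    filter_upwards [hC, hsmall, hXtop.eventually_gt_atTop 0] with n hn hsmalln hXn
    have := hP n
    have hbound := measure_sum_le_le_of_red (hρ n) (hβ n) (hmeas n) (hle n) (fun i => hlaw n i)
      (hindep n) (hX n ▸ hXn) hn hδ (hδmin.le.trans (min_le_left _ _))
      (hδmin.le.trans (min_le_right _ _))
    rw [← hX n] at hbound
    exact hbound.trans (ENNReal.ofReal_le_ofReal (by linarith))
end

section
/- Let (W_m)_{m=0}^∞ be a real-valued process adapted to a filtration (F_m)_{m=0}^∞ with W_0 = 0, and let τ ≤ ∞ be a stopping time with respect to (F_m). Suppose v, w > 0 are such that for every m ≥ 0: E[W_{m+1} − W_m | F_m] ≥ v almost surely on the event {m < τ}, and E[(W_{m+1} − W_m)²] ≤ w. Then for any b > 0, P(inf_{0 ≤ m ≤ τ} W_m ≤ −b) ≤ 8w/(bv). -/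
/-!
Stop the walk at the first time `σ` at which it drops to `-b` or reaches `τ`, and split the
stopped walk into its martingale part `M` and predictable part `A` (Doob decomposition). Before
`σ` the drift gives `A t ≥ t v`, so on the event in question `M σ ≤ -b - σ v`; and
`E[M n ^ 2] ≤ n w`, since conditioning can only shrink the second moment of an increment.
Sorting `σ` into dyadic blocks `[2 ^ k, 2 ^ (k + 1))` and applying Kolmogorov's maximal
inequality on each block bounds the probability by `∑ k, w 2 ^ (k + 1) / (b + v 2 ^ k) ^ 2`,
a telescoping-dominated series whose sum is at most `4 w / (b v)`.
-/

open MeasureTheory Filter Topology Asymptotics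
open scoped ENNReal NNReal

noncomputable section

open Finset ProbabilityTheory

namespace MeasureTheory

variable {Ω : Type*} {m m0 : MeasurableSpace Ω} {μ : Measure Ω}

lemma integral_sq_sub_condExp_le [IsFiniteMeasure μ] (hm : m ≤ m0) {X : Ω → ℝ}
    (hX : MemLp X 2 μ) : ∫ ω, (X ω - μ[X|m] ω) ^ 2 ∂μ ≤ ∫ ω, X ω ^ 2 ∂μ :=
  calc ∫ ω, (X ω - μ[X|m] ω) ^ 2 ∂μ = ∫ ω, Var[X; μ | m] ω ∂μ := (integral_condExp hm).symm
    _ ≤ ∫ ω, μ[X ^ 2|m] ω ∂μ :=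
      integral_mono_ae integrable_condVar integrable_condExp (condVar_ae_le_condExp_sq hm hX)
    _ = ∫ ω, X ω ^ 2 ∂μ := integral_condExp hm

variable {F : Filtration ℕ m0}

lemma Submartingale.measure_exists_ge_le [IsFiniteMeasure μ] {f : ℕ → Ω → ℝ}
    (hf : Submartingale f F μ) (hnonneg : 0 ≤ f) {ε : ℝ} (hε : 0 < ε) (n : ℕ) :
    μ {ω | ∃ k ≤ n, ε ≤ f k ω} ≤ ENNReal.ofReal ((∫ ω, f n ω ∂μ) / ε) := by
  lift ε to ℝ≥0 using hε.le
  set S := {ω | (ε : ℝ) ≤ (range (n + 1)).sup' nonempty_range_add_one fun k => f k ω}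
  have hsub : {ω | ∃ k ≤ n, ε ≤ f k ω} ⊆ S := fun ω ⟨k, hkn, hk⟩ =>
    hk.trans (le_sup' (fun k => f k ω) (mem_range_succ_iff.2 hkn))
  have hS : (ε : ℝ≥0∞) * μ S ≤ ENNReal.ofReal (∫ ω, f n ω ∂μ) :=
    (maximal_ineq hf hnonneg n).trans (ENNReal.ofReal_le_ofReal
      (setIntegral_le_integral (hf.integrable n) (.of_forall (hnonneg n))))
  rw [ENNReal.ofReal_div_of_pos hε, ENNReal.ofReal_coe_nnreal,
    ENNReal.le_div_iff_mul_le (.inl (by simpa using hε.ne')) (.inl ENNReal.coe_ne_top), mul_comm]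
  exact (mul_le_mul_right (measure_mono hsub) _).trans hS

namespace Martingale

variable {M : ℕ → Ω → ℝ}

lemma condExp_sq_succ_ae_eq [IsFiniteMeasure μ] (hM : Martingale M F μ)
    (hL2 : ∀ n, MemLp (M n) 2 μ) (n : ℕ) :
    μ[M (n + 1) ^ 2|F n] =ᵐ[μ] M n ^ 2 + μ[(M (n + 1) - M n) ^ 2|F n] := by
  have hcond : μ[M (n + 1)|F n] =ᵐ[μ] M n := hM.condExp_ae_eq n.le_succ
  have hvar : Var[M (n + 1); μ | F n] =ᵐ[μ] μ[(M (n + 1) - M n) ^ 2|F n] :=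
    condExp_congr_ae (by filter_upwards [hcond] with ω hω; simp [hω])
  filter_upwards [condVar_ae_eq_condExp_sq_sub_sq_condExp (F.le n) (hL2 (n + 1)), hvar, hcond]
    with ω h₁ h₂ h₃
  simp only [Pi.add_apply, Pi.sub_apply, Pi.pow_apply] at h₁ h₂ h₃ ⊢
  rw [← h₂, h₁, h₃]
  ring

lemma submartingale_sq [IsFiniteMeasure μ] (hM : Martingale M F μ)
    (hL2 : ∀ n, MemLp (M n) 2 μ) : Submartingale (fun n => M n ^ 2) F μ := by
  refine submartingale_nat (fun n => (hM.stronglyAdapted n).pow 2)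
    (fun n => (hL2 n).integrable_sq) fun n => ?_
  filter_upwards [hM.condExp_sq_succ_ae_eq hL2 n,
    condExp_nonneg (m := F n) (f := (M (n + 1) - M n) ^ 2) (.of_forall fun ω => sq_nonneg _)]
    with ω h₁ h₂
  simp only [Pi.add_apply, Pi.zero_apply] at h₁ h₂
  linarith

lemma integral_sq_succ [IsFiniteMeasure μ] (hM : Martingale M F μ)
    (hL2 : ∀ n, MemLp (M n) 2 μ) (n : ℕ) :
    ∫ ω, M (n + 1) ω ^ 2 ∂μ = ∫ ω, M n ω ^ 2 ∂μ + ∫ ω, (M (n + 1) ω - M n ω) ^ 2 ∂μ := by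
  have h := integral_congr_ae (hM.condExp_sq_succ_ae_eq hL2 n)
  rwa [integral_condExp (F.le n),
    integral_add' (f := M n ^ 2) (hL2 n).integrable_sq integrable_condExp,
    integral_condExp (F.le n)] at h

lemma maximal_ineq_sq [IsFiniteMeasure μ] (hM : Martingale M F μ)
    (hL2 : ∀ n, MemLp (M n) 2 μ) {ε : ℝ} (hε : 0 < ε) (n : ℕ) :
    μ {ω | ∃ k ≤ n, ε ≤ |M k ω|} ≤ ENNReal.ofReal ((∫ ω, M n ω ^ 2 ∂μ) / ε ^ 2) := by
  have hsub : {ω | ∃ k ≤ n, ε ≤ |M k ω|} ⊆ {ω | ∃ k ≤ n, ε ^ 2 ≤ (M k ^ 2) ω} :=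
    fun ω ⟨k, hkn, hk⟩ => ⟨k, hkn, by simpa [sq_abs] using pow_le_pow_left₀ hε.le hk 2⟩
  exact (measure_mono hsub).trans ((hM.submartingale_sq hL2).measure_exists_ge_le
    (fun n ω => sq_nonneg (M n ω)) (pow_pos hε 2) n)

end Martingale

section DoobDecomposition

variable {X : ℕ → Ω → ℝ}

lemma martingalePart_succ_sub (n : ℕ) :
    martingalePart X F μ (n + 1) - martingalePart X F μ n
      = X (n + 1) - X n - μ[X (n + 1) - X n|F n] := by
  simp only [martingalePart, predictablePart_add_one]
  abel

lemma memLp_martingalePart (hL2 : ∀ n, MemLp (X n) 2 μ) (n : ℕ) :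
    MemLp (martingalePart X F μ n) 2 μ :=
  (hL2 n).sub (memLp_finsetSum' _ fun i _ => ((hL2 (i + 1)).sub (hL2 i)).condExp one_le_two)

lemma integral_sq_martingalePart_le [IsFiniteMeasure μ] (hX : StronglyAdapted F X)
    (hL2 : ∀ n, MemLp (X n) 2 μ) {w : ℝ} (hw : ∀ n, ∫ ω, (X (n + 1) ω - X n ω) ^ 2 ∂μ ≤ w)
    (n : ℕ) : ∫ ω, martingalePart X F μ n ω ^ 2 ∂μ ≤ ∫ ω, X 0 ω ^ 2 ∂μ + n * w := by
  have hM : Martingale (martingalePart X F μ) F μ :=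
    martingale_martingalePart hX fun n => (hL2 n).integrable one_le_two
  induction n with
  | zero => simp [martingalePart_zero]
  | succ n ih =>
    have hinc : ∫ ω, (martingalePart X F μ (n + 1) ω - martingalePart X F μ n ω) ^ 2 ∂μ ≤ w := by
      simp_rw [← Pi.sub_apply (martingalePart X F μ (n + 1)), martingalePart_succ_sub]
      exact (integral_sq_sub_condExp_le (F.le n) ((hL2 (n + 1)).sub (hL2 n))).trans (hw n)
    rw [hM.integral_sq_succ (memLp_martingalePart hL2) n]
    push_cast
    linarith

end DoobDecomposition

end MeasureTheory

lemma dyadic_term_le_sub {v w b : ℝ} (hv : 0 < v) (hw : 0 ≤ w) (hb : 0 < b) (k : ℕ) :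
    w * 2 ^ (k + 1) / (b + v * 2 ^ k) ^ 2
      ≤ 8 * w / (v * (2 * b + v * 2 ^ k)) - 8 * w / (v * (2 * b + v * 2 ^ (k + 1))) := by
  rw [pow_succ, div_sub_div _ _ (by positivity) (by positivity),
    div_le_div_iff₀ (by positivity) (by positivity)]
  ring_nf
  nlinarith [show 0 ≤ w * v ^ 3 * b * 2 ^ (k * 2) by positivity,
    show 0 ≤ w * v ^ 4 * 2 ^ (k * 3) by positivity]

lemma tsum_dyadic_le {v w b : ℝ} (hv : 0 < v) (hw : 0 ≤ w) (hb : 0 < b) :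
    ∑' k : ℕ, ENNReal.ofReal (w * 2 ^ (k + 1) / (b + v * 2 ^ k) ^ 2)
      ≤ ENNReal.ofReal (4 * w / (b * v)) := by
  set g : ℕ → ℝ := fun k => 8 * w / (v * (2 * b + v * 2 ^ k))
  rw [ENNReal.tsum_eq_iSup_nat]
  refine iSup_le fun n => ?_
  rw [← ENNReal.ofReal_sum_of_nonneg fun k _ => by positivity]
  refine ENNReal.ofReal_le_ofReal ?_
  calc ∑ k ∈ range n, w * 2 ^ (k + 1) / (b + v * 2 ^ k) ^ 2
      ≤ ∑ k ∈ range n, (g k - g (k + 1)) := sum_le_sum fun k _ => dyadic_term_le_sub hv hw hb k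
    _ = g 0 - g n := sum_range_sub' g n
    _ ≤ g 0 := sub_le_self _ (by positivity)
    _ ≤ 4 * w / (b * v) := by
      rw [div_le_div_iff₀ (by positivity) (by positivity)]
      nlinarith [mul_nonneg hw hv.le, mul_nonneg (mul_nonneg hw hv.le) hb.le]

section StoppedWalk

variable {Ω : Type*} {m0 : MeasurableSpace Ω} {μ : Measure Ω} {F : Filtration ℕ m0}
  {W : ℕ → Ω → ℝ} {τ : Ω → ℕ∞} {b v : ℝ}

def survivalSet (W : ℕ → Ω → ℝ) (τ : Ω → ℕ∞) (b : ℝ) (j : ℕ) : Set Ω :=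
  {ω | ∀ i ≤ j, -b < W i ω ∧ (i : ℕ∞) < τ ω}

/-- `stoppedWalk W τ b n = W (min n σ) - W 0`, where `σ` is the first time `i` at which
`W i ≤ -b` or `τ ≤ i`. -/
def stoppedWalk (W : ℕ → Ω → ℝ) (τ : Ω → ℕ∞) (b : ℝ) (n : ℕ) : Ω → ℝ :=
  ∑ j ∈ range n, (survivalSet W τ b j).indicator (W (j + 1) - W j)

lemma stoppedWalk_succ_sub (n : ℕ) :
    stoppedWalk W τ b (n + 1) - stoppedWalk W τ b n
      = (survivalSet W τ b n).indicator (W (n + 1) - W n) := by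
  simp [stoppedWalk, sum_range_succ]

lemma stoppedWalk_apply_of_forall_mem {ω : Ω} {t : ℕ} (h : ∀ j < t, ω ∈ survivalSet W τ b j) :
    stoppedWalk W τ b t ω = W t ω - W 0 ω := by
  rw [stoppedWalk, Finset.sum_apply, ← sum_range_sub (fun i => W i ω)]
  exact sum_congr rfl fun j hj => Set.indicator_of_mem (h j (mem_range.1 hj)) _

lemma exists_forall_mem_survivalSet_of_exists_le {ω : Ω} (h0 : -b < W 0 ω)
    (h : ∃ m : ℕ, (m : ℕ∞) ≤ τ ω ∧ W m ω ≤ -b) :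
    ∃ t, 0 < t ∧ W t ω ≤ -b ∧ ∀ j < t, ω ∈ survivalSet W τ b j := by
  classical
  obtain ⟨m, hmτ, hm⟩ := h
  have hexit : ∃ i : ℕ, ¬(-b < W i ω ∧ (i : ℕ∞) < τ ω) := ⟨m, fun h => h.1.not_ge hm⟩
  set t := Nat.find hexit
  have hsurv : ∀ j < t, ω ∈ survivalSet W τ b j := fun j hj i hij =>
    not_not.1 (Nat.find_min hexit (hij.trans_lt hj))
  have htm : t ≤ m := Nat.find_min' hexit fun h => h.1.not_ge hm
  have hWt : W t ω ≤ -b := by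
    by_contra! hlt
    have hspec : ¬(-b < W t ω ∧ (t : ℕ∞) < τ ω) := Nat.find_spec hexit
    have hτt : τ ω ≤ t := not_lt.1 fun h => hspec ⟨hlt, h⟩
    have hmt : m ≤ t := by exact_mod_cast hmτ.trans hτt
    exact hlt.not_ge (le_antisymm htm hmt ▸ hm)
  refine ⟨t, Nat.pos_of_ne_zero fun ht0 => ?_, hWt, hsurv⟩
  rw [ht0] at hWt
  exact hWt.not_gt h0

lemma measurableSet_survivalSet (hW : Adapted F W)
    (hτ : ∀ m : ℕ, MeasurableSet[F m] {ω | τ ω ≤ (m : ℕ∞)}) (j : ℕ) :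
    MeasurableSet[F j] (survivalSet W τ b j) := by
  have : survivalSet W τ b j = ⋂ i ≤ j, (W i ⁻¹' Set.Ioi (-b) ∩ {ω | τ ω ≤ (i : ℕ∞)}ᶜ) := by
    ext ω
    simp [survivalSet]
  rw [this]
  exact .biInter (Set.to_countable _) fun i hij =>
    ((hW i).mono (F.mono hij) le_rfl measurableSet_Ioi).inter (F.mono hij _ (hτ i)).compl

lemma stronglyAdapted_stoppedWalk (hW : Adapted F W)
    (hτ : ∀ m : ℕ, MeasurableSet[F m] {ω | τ ω ≤ (m : ℕ∞)}) :
    StronglyAdapted F (stoppedWalk W τ b) := fun n =>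
  Finset.stronglyMeasurable_sum _ fun j hj =>
    have hjn : j + 1 ≤ n := mem_range.1 hj
    (((hW (j + 1)).stronglyMeasurable.mono (F.mono hjn)).sub
      ((hW j).stronglyMeasurable.mono (F.mono (j.le_succ.trans hjn)))).indicator
      (F.mono (j.le_succ.trans hjn) _ (measurableSet_survivalSet hW hτ j))

lemma memLp_succ_sub (hW : Adapted F W)
    (hsq : ∀ m : ℕ, Integrable (fun ω => (W (m + 1) ω - W m ω) ^ 2) μ) (n : ℕ) :
    MemLp (W (n + 1) - W n) 2 μ :=
  have hW' : ∀ i, StronglyMeasurable (W i) := fun i =>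
    (hW i : Measurable[F i] (W i)).stronglyMeasurable.mono (F.le i)
  (memLp_two_iff_integrable_sq ((hW' (n + 1)).sub (hW' n)).aestronglyMeasurable).2 (hsq n)

lemma memLp_stoppedWalk (hW : Adapted F W)
    (hτ : ∀ m : ℕ, MeasurableSet[F m] {ω | τ ω ≤ (m : ℕ∞)})
    (hsq : ∀ m : ℕ, Integrable (fun ω => (W (m + 1) ω - W m ω) ^ 2) μ) (n : ℕ) :
    MemLp (stoppedWalk W τ b n) 2 μ :=
  memLp_finsetSum' _ fun j _ =>
    (memLp_succ_sub hW hsq j).indicator (F.le j _ (measurableSet_survivalSet hW hτ j))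

lemma integral_sq_stoppedWalk_succ_sub_le (hW : Adapted F W)
    (hτ : ∀ m : ℕ, MeasurableSet[F m] {ω | τ ω ≤ (m : ℕ∞)})
    (hsq : ∀ m : ℕ, Integrable (fun ω => (W (m + 1) ω - W m ω) ^ 2) μ) (n : ℕ) :
    ∫ ω, (stoppedWalk W τ b (n + 1) ω - stoppedWalk W τ b n ω) ^ 2 ∂μ
      ≤ ∫ ω, (W (n + 1) ω - W n ω) ^ 2 ∂μ := by
  refine integral_mono (((memLp_stoppedWalk hW hτ hsq (n + 1)).sub
    (memLp_stoppedWalk hW hτ hsq n)).integrable_sq) (hsq n) fun ω => ?_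
  rw [← Pi.sub_apply (stoppedWalk W τ b (n + 1)), stoppedWalk_succ_sub]
  by_cases hω : ω ∈ survivalSet W τ b n <;> simp [hω, sq_nonneg]

lemma ae_martingalePart_stoppedWalk_le [IsFiniteMeasure μ] (hW : Adapted F W)
    (hτ : ∀ m : ℕ, MeasurableSet[F m] {ω | τ ω ≤ (m : ℕ∞)})
    (hsq : ∀ m : ℕ, Integrable (fun ω => (W (m + 1) ω - W m ω) ^ 2) μ)
    (hdrift : ∀ m : ℕ, ∀ᵐ ω ∂μ, (m : ℕ∞) < τ ω →
      v ≤ (μ[fun ω' => W (m + 1) ω' - W m ω' | F m]) ω) :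
    ∀ᵐ ω ∂μ, ∀ t, (∀ j < t, ω ∈ survivalSet W τ b j) →
      martingalePart (stoppedWalk W τ b) F μ t ω ≤ W t ω - W 0 ω - t * v := by
  have hdrift' : ∀ᵐ ω ∂μ, ∀ j, ω ∈ survivalSet W τ b j →
      v ≤ μ[stoppedWalk W τ b (j + 1) - stoppedWalk W τ b j|F j] ω := by
    refine ae_all_iff.2 fun j => ?_
    filter_upwards [hdrift j, condExp_indicator ((memLp_succ_sub hW hsq j).integrable one_le_two)
      (measurableSet_survivalSet (b := b) hW hτ j)] with ω hv hind hmem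
    rw [stoppedWalk_succ_sub, hind, Set.indicator_of_mem hmem]
    exact hv (hmem j le_rfl).2
  filter_upwards [hdrift'] with ω hω t ht
  have hpred : t * v ≤ predictablePart (stoppedWalk W τ b) F μ t ω := by
    simp only [predictablePart, Finset.sum_apply]
    calc t * v = ∑ j ∈ range t, v := by simp
      _ ≤ _ := sum_le_sum fun j hj => hω j (ht j (mem_range.1 hj))
  rw [martingalePart, Pi.sub_apply, stoppedWalk_apply_of_forall_mem ht]
  linarith

lemma ae_exists_le_abs_martingalePart_stoppedWalk [IsFiniteMeasure μ] (hW : Adapted F W)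
    (hW0 : ∀ ω, W 0 ω = 0) (hτ : ∀ m : ℕ, MeasurableSet[F m] {ω | τ ω ≤ (m : ℕ∞)})
    (hsq : ∀ m : ℕ, Integrable (fun ω => (W (m + 1) ω - W m ω) ^ 2) μ)
    (hdrift : ∀ m : ℕ, ∀ᵐ ω ∂μ, (m : ℕ∞) < τ ω →
      v ≤ (μ[fun ω' => W (m + 1) ω' - W m ω' | F m]) ω) (hv : 0 ≤ v) (hb : 0 < b) :
    ∀ᵐ ω ∂μ, (∃ m : ℕ, (m : ℕ∞) ≤ τ ω ∧ W m ω ≤ -b) →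
      ∃ k : ℕ, ∃ t ≤ 2 ^ (k + 1),
        b + v * 2 ^ k ≤ |martingalePart (stoppedWalk W τ b) F μ t ω| := by
  filter_upwards [ae_martingalePart_stoppedWalk_le hW hτ hsq hdrift] with ω hM hexit
  obtain ⟨t, ht0, hWt, hsurv⟩ :=
    exists_forall_mem_survivalSet_of_exists_le (by rw [hW0 ω]; linarith) hexit
  have hMt := hM t hsurv
  rw [hW0 ω] at hMt
  have hlog : (2 : ℝ) ^ Nat.log 2 t ≤ t := by exact_mod_cast Nat.pow_log_le_self 2 ht0.ne'
  refine ⟨Nat.log 2 t, t, (Nat.lt_pow_succ_log_self one_lt_two t).le, ?_⟩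
  calc b + v * 2 ^ Nat.log 2 t ≤ -martingalePart (stoppedWalk W τ b) F μ t ω := by
        nlinarith [mul_le_mul_of_nonneg_left hlog hv]
    _ ≤ _ := neg_le_abs _

end StoppedWalk

theorem random_walk_positive_drift_infimum_bound_general
    {Ω : Type*} {m0 : MeasurableSpace Ω} (μ : Measure Ω) [IsProbabilityMeasure μ]
    (F : Filtration ℕ m0)
    (W : ℕ → Ω → ℝ) (hadapted : Adapted F W) (hW0 : ∀ ω, W 0 ω = 0)
    -- τ ≤ ∞ is a stopping time for (F_m)
    (τ : Ω → ℕ∞) (hτ : ∀ m : ℕ, MeasurableSet[F m] {ω | τ ω ≤ (m : ℕ∞)})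
    (v w : ℝ) (hv : 0 < v)
    (hsqint : ∀ m : ℕ, Integrable (fun ω => (W (m + 1) ω - W m ω) ^ 2) μ)
    -- E[W_{m+1} − W_m | F_m] ≥ v a.s. on {m < τ}
    (hdrift : ∀ m : ℕ, ∀ᵐ ω ∂μ, (m : ℕ∞) < τ ω →
      v ≤ (μ[fun ω' => W (m + 1) ω' - W m ω' | F m]) ω)
    -- E[(W_{m+1} − W_m)²] ≤ w
    (hvar : ∀ m : ℕ, ∫ ω, (W (m + 1) ω - W m ω) ^ 2 ∂μ ≤ w)
    (b : ℝ) (hb : 0 < b) :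
    μ {ω | ∃ m : ℕ, (m : ℕ∞) ≤ τ ω ∧ W m ω ≤ -b} ≤ ENNReal.ofReal (8 * w / (b * v)) := by
  have hw : 0 ≤ w := (integral_nonneg fun ω => sq_nonneg _).trans (hvar 0)
  set M := martingalePart (stoppedWalk W τ b) F μ
  have hS := stronglyAdapted_stoppedWalk (b := b) hadapted hτ
  have hSL2 := memLp_stoppedWalk (b := b) hadapted hτ hsqint
  have hM : Martingale M F μ :=
    martingale_martingalePart hS fun n => (hSL2 n).integrable one_le_two
  have hMsq (n : ℕ) : ∫ ω, M n ω ^ 2 ∂μ ≤ n * w := by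
    simpa [stoppedWalk] using integral_sq_martingalePart_le hS hSL2
      (fun k => (integral_sq_stoppedWalk_succ_sub_le hadapted hτ hsqint k).trans (hvar k)) n
  calc μ {ω | ∃ m : ℕ, (m : ℕ∞) ≤ τ ω ∧ W m ω ≤ -b}
      ≤ μ (⋃ k : ℕ, {ω | ∃ t ≤ 2 ^ (k + 1), b + v * 2 ^ k ≤ |M t ω|}) :=
        measure_mono_ae <| (ae_exists_le_abs_martingalePart_stoppedWalk hadapted hW0 hτ hsqint
          hdrift hv.le hb).mono fun ω h hω => Set.mem_iUnion.2 (h hω)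
    _ ≤ ∑' k : ℕ, μ {ω | ∃ t ≤ 2 ^ (k + 1), b + v * 2 ^ k ≤ |M t ω|} := measure_iUnion_le _
    _ ≤ ∑' k : ℕ, ENNReal.ofReal (w * 2 ^ (k + 1) / (b + v * 2 ^ k) ^ 2) :=
        ENNReal.tsum_le_tsum fun k =>
          (hM.maximal_ineq_sq (memLp_martingalePart hSL2) (by positivity) _).trans
            (ENNReal.ofReal_le_ofReal (by gcongr; simpa [mul_comm] using hMsq (2 ^ (k + 1))))
    _ ≤ ENNReal.ofReal (4 * w / (b * v)) := tsum_dyadic_le hv hw hb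
    _ ≤ ENNReal.ofReal (8 * w / (b * v)) := ENNReal.ofReal_le_ofReal (by gcongr; norm_num)

/-- Lemma 4.2: if `(W_m)` is adapted to `(F_m)` with `W_0 = 0`, `τ` is a
stopping time, `E[ΔW_{m+1} | F_m] ≥ v` a.s. on `{m < τ}` and
`E[(ΔW_{m+1})²] ≤ w`, then `P(inf_{0 ≤ m ≤ τ} W_m ≤ −b) ≤ 8w/(bv)`. -/
theorem random_walk_positive_drift_infimum_bound
    {Ω : Type*} {m0 : MeasurableSpace Ω} (μ : Measure Ω) [IsProbabilityMeasure μ]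
    (F : Filtration ℕ m0)
    (W : ℕ → Ω → ℝ) (hadapted : Adapted F W) (hW0 : ∀ ω, W 0 ω = 0)
    -- τ ≤ ∞ is a stopping time for (F_m)
    (τ : Ω → ℕ∞) (hτ : ∀ m : ℕ, MeasurableSet[F m] {ω | τ ω ≤ (m : ℕ∞)})
    (v w : ℝ) (hv : 0 < v) (hw : 0 < w)
    (hsqint : ∀ m : ℕ, Integrable (fun ω => (W (m + 1) ω - W m ω) ^ 2) μ)
    -- E[W_{m+1} − W_m | F_m] ≥ v a.s. on {m < τ}
    (hdrift : ∀ m : ℕ, ∀ᵐ ω ∂μ, (m : ℕ∞) < τ ω →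
      v ≤ (μ[fun ω' => W (m + 1) ω' - W m ω' | F m]) ω)
    -- E[(W_{m+1} − W_m)²] ≤ w
    (hvar : ∀ m : ℕ, ∫ ω, (W (m + 1) ω - W m ω) ^ 2 ∂μ ≤ w)
    (b : ℝ) (hb : 0 < b) :
    μ {ω | ∃ m : ℕ, (m : ℕ∞) ≤ τ ω ∧ W m ω ≤ -b} ≤ ENNReal.ofReal (8 * w / (b * v)) :=
  random_walk_positive_drift_infimum_bound_general μ F W hadapted hW0 τ hτ v w hv hsqint hdrift hvar
    b hb
end
end

section
/- Suppose assumptions (D1), (D2) and α_n → 0 hold, and define R₀ := (β_n/(ρ_n+β_n)) · Σ_k (k−1)k n_S(k) / Σ_k k n_k. Then: ρ_n/β_n = O(1); Σ_k k n_k = O(n_S) while Σ_k k n_k/n_S is also bounded below by a positive constant; R₀ → 1; and α_n = (1+o(1)) λ₂ (R₀ − 1), so that (R₀ − 1)/α_n is bounded above and below by positive constants. Conversely, under (D1) and (D2), if R₀ → 1 then α_n → 0. -/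
open Filter Topology Asymptotics

/-!
With `a n = Σ k(k-1) n_S(k) / n_S` and `Q n = (1 + ρ/β) Σ k n_k / n_S` one has `α = a - Q` and
`R₀ = a / Q`, so `α = Q (R₀ - 1)`. Assumption (D2) makes the third-moment tails of the empirical
degree distributions uniformly small, so by (D1) limits pass through the degree sums:
`a → λ₂` and `Σ k n_S(k) / n_S → λ > 0`, which bounds `Q` below. Hence `α → 0` iff `Q → λ₂`
iff `R₀ → 1`, and then `Q → λ₂ > 0` gives all the asymptotics.
-/

open Finset in
theorem summable_and_tsum_le_of_tendsto {ι β : Type*} {L : Filter ι} [L.NeBot]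
    {h : ι → β → ℝ} {H : β → ℝ} {C : ℝ} (hnonneg : ∀ i k, 0 ≤ h i k)
    (hsum : ∀ i, Summable (h i)) (hlim : ∀ k, Tendsto (h · k) L (𝓝 (H k)))
    (hC : ∀ᶠ i in L, ∑' k, h i k ≤ C) :
    Summable H ∧ ∑' k, H k ≤ C := by
  have hH : 0 ≤ H := fun k => ge_of_tendsto' (hlim k) (hnonneg · k)
  have hpartial : ∀ u : Finset β, ∑ k ∈ u, H k ≤ C := fun u =>
    le_of_tendsto (tendsto_finsetSum u fun k _ => hlim k) <| hC.mono fun i hi =>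
      ((hsum i).sum_le_tsum u fun k _ => hnonneg i k).trans hi
  exact ⟨summable_of_sum_le hH hpartial, Real.tsum_le_of_sum_le hH hpartial⟩

open Finset in
theorem tendsto_tsum_of_uniform_tail {ι E : Type*} [NormedAddCommGroup E] [CompleteSpace E]
    {L : Filter ι} [L.NeBot] {f : ι → ℕ → E} {F : ℕ → E}
    (hsum : ∀ i, Summable fun k => ‖f i k‖) (hlim : ∀ k, Tendsto (f · k) L (𝓝 (F k)))
    (htail : ∀ ε > 0, ∃ M, ∀ᶠ i in L, ∑' k, ‖f i (k + M)‖ ≤ ε) :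
    Tendsto (fun i => ∑' k, f i k) L (𝓝 (∑' k, F k)) := by
  rw [Metric.tendsto_nhds]
  intro ε hε
  obtain ⟨M, hM⟩ := htail (ε / 3) (by positivity)
  obtain ⟨hF_tail_summable, hF_tail⟩ := summable_and_tsum_le_of_tendsto
    (fun _ _ => norm_nonneg _) (fun i => (summable_nat_add_iff M).2 (hsum i))
    (fun k => (hlim (k + M)).norm) hM
  have hF : Summable F := ((summable_nat_add_iff M).1 hF_tail_summable).of_norm
  have hhead : Tendsto (fun i => ‖∑ k ∈ range M, (f i k - F k)‖) L (𝓝 0) := by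
    simpa using (tendsto_finsetSum (range M) fun k _ => (hlim k).sub_const (F k)).norm
  filter_upwards [hM, hhead.eventually (gt_mem_nhds (by positivity : (0 : ℝ) < ε / 3))]
    with i hf_tail hhead_i
  have hsplit : (∑' k, f i k) - ∑' k, F k
      = ∑ k ∈ range M, (f i k - F k) + (∑' k, f i (k + M) - ∑' k, F (k + M)) := by
    rw [← (hsum i).of_norm.sum_add_tsum_nat_add M, ← hF.sum_add_tsum_nat_add M, sum_sub_distrib,
      add_sub_add_comm]
  have hf_tail_summable : Summable fun k => ‖f i (k + M)‖ :=
    (summable_nat_add_iff (f := fun k => ‖f i k‖) M).2 (hsum i)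
  have hf_norm := norm_tsum_le_tsum_norm hf_tail_summable
  have hF_norm := norm_tsum_le_tsum_norm hF_tail_summable
  rw [dist_eq_norm, hsplit]
  calc _ ≤ ‖∑ k ∈ range M, (f i k - F k)‖ + ‖∑' k, f i (k + M) - ∑' k, F (k + M)‖ :=
        norm_add_le _ _
    _ ≤ ‖∑ k ∈ range M, (f i k - F k)‖ + (‖∑' k, f i (k + M)‖ + ‖∑' k, F (k + M)‖) := by
        gcongr
        exact norm_sub_le _ _
    _ < ε := by linarith

open Finset in
theorem tsum_ite_lt_eq_tsum_nat_add {G : Type*} [AddCommGroup G] [TopologicalSpace G]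
    [IsTopologicalAddGroup G] [T2Space G] {f : ℕ → G} (hf : Summable f) (M : ℕ) :
    ∑' k, (if M < k then f k else 0) = ∑' k, f (k + (M + 1)) := by
  have hshift : (fun k => if M < k + (M + 1) then f (k + (M + 1)) else 0) =
      fun k => f (k + (M + 1)) := funext fun k => if_pos (by omega)
  have hsum : Summable fun k => if M < k then f k else 0 :=
    (summable_nat_add_iff (M + 1)).1 (hshift ▸ (summable_nat_add_iff (M + 1)).2 hf)
  rw [← hsum.sum_add_tsum_nat_add (M + 1), hshift,
    sum_eq_zero fun k hk => if_neg (by simp at hk; omega), zero_add]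

theorem tendsto_tsum_mul_of_cube_tail {ι : Type*} {L : Filter ι} [L.NeBot]
    {g : ι → ℕ → ℝ} {p w : ℕ → ℝ} (hg : ∀ i k, 0 ≤ g i k)
    (hsum : ∀ i, Summable fun k : ℕ => (k : ℝ) ^ 3 * g i k)
    (hlim : ∀ k, Tendsto (g · k) L (𝓝 (p k)))
    (htail : ∀ ε > 0, ∃ M : ℕ, ∀ᶠ i in L,
      ∑' k : ℕ, (if M < k then (k : ℝ) ^ 3 * g i k else 0) < ε)
    (hw : ∀ k, |w k| ≤ (k : ℝ) ^ 3) :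
    Tendsto (fun i => ∑' k, w k * g i k) L (𝓝 (∑' k, w k * p k)) := by
  have hnorm : ∀ i k, ‖w k * g i k‖ ≤ (k : ℝ) ^ 3 * g i k := fun i k => by
    rw [norm_mul, Real.norm_eq_abs, Real.norm_of_nonneg (hg i k)]
    exact mul_le_mul_of_nonneg_right (hw k) (hg i k)
  have hsum_norm : ∀ i, Summable fun k => ‖w k * g i k‖ := fun i =>
    (hsum i).of_nonneg_of_le (fun _ => norm_nonneg _) (hnorm i)
  refine tendsto_tsum_of_uniform_tail hsum_norm (fun k => (hlim k).const_mul (w k)) ?_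
  intro ε hε
  obtain ⟨M, hM⟩ := htail ε hε
  refine ⟨M + 1, hM.mono fun i hi => ?_⟩
  calc ∑' k, ‖w (k + (M + 1)) * g i (k + (M + 1))‖
      ≤ ∑' k, ((k + (M + 1) : ℕ) : ℝ) ^ 3 * g i (k + (M + 1)) :=
        ((summable_nat_add_iff (f := fun k => ‖w k * g i k‖) (M + 1)).2
          (hsum_norm i)).tsum_le_tsum (fun k => hnorm i _)
          ((summable_nat_add_iff (f := fun k : ℕ => (k : ℝ) ^ 3 * g i k) (M + 1)).2 (hsum i))
    _ = ∑' k : ℕ, (if M < k then (k : ℝ) ^ 3 * g i k else 0) :=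
        (tsum_ite_lt_eq_tsum_nat_add (hsum i) M).symm
    _ ≤ ε := hi.le

theorem support_finite_of_le {m m' : ℕ → ℕ} (hle : ∀ k, m k ≤ m' k)
    (hm' : (Function.support m').Finite) : (Function.support m).Finite :=
  hm'.subset fun k hk => (Nat.pos_of_ne_zero hk |>.trans_le (hle k)).ne'

theorem summable_mul_natCast_of_support_finite {m : ℕ → ℕ}
    (hm : (Function.support m).Finite) (u : ℕ → ℝ) : Summable fun k => u k * (m k : ℝ) :=
  summable_of_hasFiniteSupport (hm.subset fun k hk => by simp_all)

theorem abs_natCast_le_pow_three (k : ℕ) : |(k : ℝ)| ≤ (k : ℝ) ^ 3 := by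
  rcases Nat.eq_zero_or_pos k with rfl | hk
  · simp
  · have hk' : (1 : ℝ) ≤ k := by exact_mod_cast hk
    rw [abs_of_nonneg (by positivity)]
    exact le_self_pow₀ hk' (by norm_num)

theorem abs_natCast_mul_sub_one_le_pow_three (k : ℕ) :
    |(k : ℝ) * ((k : ℝ) - 1)| ≤ (k : ℝ) ^ 3 := by
  rcases Nat.eq_zero_or_pos k with rfl | hk
  · simp
  · have hk' : (1 : ℝ) ≤ k := by exact_mod_cast hk
    rw [abs_of_nonneg (by nlinarith)]
    nlinarith [mul_nonneg (sq_nonneg (k : ℝ)) (sub_nonneg.2 hk')]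

theorem tendsto_tsum_mul_div_of_cube_tail (nS : ℕ → ℕ) (nSk : ℕ → ℕ → ℕ)
    (hfin : ∀ n, (Function.support (nSk n)).Finite) {p w : ℕ → ℝ}
    (hlim : ∀ k, Tendsto (fun n => (nSk n k : ℝ) / (nS n : ℝ)) atTop (𝓝 (p k)))
    (htail : ∀ ε : ℝ, 0 < ε → ∃ M : ℕ, ∀ n,
      (∑' k : ℕ, if M < k then (k : ℝ) ^ 3 * (nSk n k : ℝ) else 0) / (nS n : ℝ) < ε)
    (hw : ∀ k, |w k| ≤ (k : ℝ) ^ 3) :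
    Tendsto (fun n => (∑' k : ℕ, w k * (nSk n k : ℝ)) / (nS n : ℝ)) atTop
      (𝓝 (∑' k, w k * p k)) := by
  have hdiv : ∀ (u : ℕ → ℝ) n, (∑' k, u k * (nSk n k : ℝ)) / (nS n : ℝ) =
      ∑' k, u k * ((nSk n k : ℝ) / (nS n : ℝ)) := fun u n => by
    simp only [← tsum_div_const, mul_div_assoc]
  simp only [hdiv]
  refine tendsto_tsum_mul_of_cube_tail (fun _ _ => by positivity)
    (fun n => summable_of_hasFiniteSupport ((hfin n).subset fun k hk => ?_)) hlim
    (fun ε hε => ?_) hw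
  · simp_all
  · obtain ⟨M, hM⟩ := htail ε hε
    refine ⟨M, Eventually.of_forall fun n => ?_⟩
    convert hM n using 1
    rw [← tsum_div_const]
    congr 1 with k
    split_ifs <;> simp [mul_div_assoc]

theorem eventually_le_tsum_mul_div_of_lt (nS : ℕ → ℕ) (nSk nk : ℕ → ℕ → ℕ)
    (hle : ∀ n k, nSk n k ≤ nk n k) (hfin : ∀ n, (Function.support (nk n)).Finite)
    {p : ℕ → ℝ} {c : ℝ} (hc : c < ∑' k : ℕ, (k : ℝ) * p k)
    (hD1 : ∀ k, Tendsto (fun n => (nSk n k : ℝ) / (nS n : ℝ)) atTop (𝓝 (p k)))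
    (hD2 : ∀ ε : ℝ, 0 < ε → ∃ M : ℕ, ∀ n,
      (∑' k : ℕ, if M < k then (k : ℝ) ^ 3 * (nSk n k : ℝ) else 0) / (nS n : ℝ) < ε) :
    ∀ᶠ n in atTop, c ≤ (∑' k : ℕ, (k : ℝ) * (nk n k : ℝ)) / (nS n : ℝ) := by
  have hfinS n := support_finite_of_le (hle n) (hfin n)
  have hS := tendsto_tsum_mul_div_of_cube_tail nS nSk hfinS hD1 hD2 abs_natCast_le_pow_three
  filter_upwards [hS.eventually (le_mem_nhds hc)] with n hn
  refine hn.trans (div_le_div_of_nonneg_right ?_ (Nat.cast_nonneg _))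
  exact (summable_mul_natCast_of_support_finite (hfinS n) _).tsum_le_tsum
    (fun k => mul_le_mul_of_nonneg_left (Nat.cast_le.2 (hle n k)) k.cast_nonneg)
    (summable_mul_natCast_of_support_finite (hfin n) _)

theorem Asymptotics.IsTheta.exists_pos_bounds {α E F : Type*} [Norm E]
    [SeminormedAddCommGroup F] {l : Filter α} {f : α → E} {g : α → F} (h : f =Θ[l] g) :
    ∃ c C : ℝ, 0 < c ∧ ∀ᶠ x in l, c * ‖f x‖ ≤ ‖g x‖ ∧ ‖g x‖ ≤ C * ‖f x‖ := by
  obtain ⟨c', hc', hfg⟩ := h.1.exists_pos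
  obtain ⟨C, hgf⟩ := h.2.bound
  refine ⟨c'⁻¹, C, inv_pos.2 hc', (hfg.bound.and hgf).mono fun x ⟨h₁, h₂⟩ => ⟨?_, h₂⟩⟩
  rwa [inv_mul_le_iff₀ hc']

section

variable {ι : Type*} {L : Filter ι} {a Q : ι → ℝ} {ℓ : ℝ}

theorem isBigO_one_of_one_add_mul_le {b t : ι → ℝ} {c C : ℝ}
    (hc : 0 < c) (hb : ∀ i, 0 ≤ b i) (ht : ∀ᶠ i in L, c ≤ t i)
    (hbt : ∀ᶠ i in L, (1 + b i) * t i ≤ C) : b =O[L] fun _ => (1 : ℝ) := by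
  refine IsBigO.of_bound (C / c) ?_
  filter_upwards [ht, hbt] with i hti hbti
  rw [Real.norm_of_nonneg (hb i), norm_one, mul_one, le_div_iff₀ hc]
  nlinarith [hb i]

theorem isEquivalent_sub_mul_div_sub_one (hQ : Tendsto Q L (𝓝 ℓ)) (hℓ : ℓ ≠ 0) :
    (fun i => a i - Q i) ~[L] fun i => ℓ * (a i / Q i - 1) := by
  have hfactor : (fun i => (Q i - ℓ) * (a i / Q i - 1)) =ᶠ[L]
      fun i => (a i - Q i) - ℓ * (a i / Q i - 1) := by
    filter_upwards [hQ.eventually_ne hℓ] with i hQi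
    field_simp
  have hsmall : (fun i => (Q i - ℓ) * (a i / Q i - 1)) =o[L] fun i => a i / Q i - 1 := by
    simpa using ((isLittleO_one_iff ℝ).2 (by simpa using hQ.sub_const ℓ)).mul_isBigO
      (isBigO_refl (fun i => a i / Q i - 1) L)
  exact (hsmall.congr' hfactor EventuallyEq.rfl).trans_isBigO
    ((isTheta_const_mul_left hℓ).2 (isTheta_refl _ _)).2

theorem tendsto_sub_of_tendsto_div (ha : Tendsto a L (𝓝 ℓ))
    (hR : Tendsto (fun i => a i / Q i) L (𝓝 1)) :
    Tendsto (fun i => a i - Q i) L (𝓝 0) := by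
  -- `a / Q` is eventually nonzero, which forces `Q ≠ 0` (as `a / 0 = 0`) and `Q = a / (a / Q)`.
  have hQ : Tendsto (fun i => a i / (a i / Q i)) L (𝓝 ℓ) := by
    have := ha.div hR one_ne_zero
    rwa [div_one] at this
  have hQeq : (fun i => a i / (a i / Q i)) =ᶠ[L] Q := by
    filter_upwards [hR.eventually_ne one_ne_zero] with i hRi
    rcases eq_or_ne (a i) 0 with h | h
    · simp [h] at hRi
    · rcases eq_or_ne (Q i) 0 with h' | h'
      · simp [h'] at hRi
      · field_simp
  simpa using ha.sub (hQ.congr' hQeq)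

end

/-- At `T = 0` both sides vanish, by the convention `x / 0 = 0`. -/
theorem basic_reproductive_ratio_eq_div {A T N ρ β : ℝ} (hN : N ≠ 0) (hβ : β ≠ 0) :
    β / (ρ + β) * (A / T) = A / N / ((1 + ρ / β) * T / N) := by
  rw [div_div_div_cancel_right₀ hN]
  rcases eq_or_ne T 0 with rfl | hT
  · simp
  · field_simp
    ring

theorem basic_reproductive_ratio_vs_alpha_general
    -- degree data
    (nS : ℕ → ℕ) (hnSpos : ∀ n, 0 < nS n)
    (nSk nk : ℕ → ℕ → ℕ) (hle : ∀ n k, nSk n k ≤ nk n k)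
    (hfin : ∀ n, (Function.support (nk n)).Finite)
    -- rates
    (ρ β : ℕ → ℝ) (hρ : ∀ n, 0 ≤ ρ n) (hβ : ∀ n, 0 < β n)
    -- α_n
    (α : ℕ → ℝ)
    (hα : ∀ n, α n =
      -(1 + ρ n / β n) * (∑' k : ℕ, (k : ℝ) * (nk n k : ℝ)) / (nS n : ℝ)
        + (∑' k : ℕ, (k : ℝ) * ((k : ℝ) - 1) * (nSk n k : ℝ)) / (nS n : ℝ))
    -- the basic reproductive ratio R₀
    (R₀ : ℕ → ℝ)
    (hR₀ : ∀ n, R₀ n = β n / (ρ n + β n) *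
      ((∑' k : ℕ, ((k : ℝ) - 1) * (k : ℝ) * (nSk n k : ℝ))
        / ∑' k : ℕ, (k : ℝ) * (nk n k : ℝ)))
    -- limiting degree distribution
    (p : ℕ → ℝ)
    (lam lam2 : ℝ)
    (hlam : lam = ∑' k : ℕ, (k : ℝ) * p k)
    (hlam2 : lam2 = ∑' k : ℕ, (k : ℝ) * ((k : ℝ) - 1) * p k)
    (hlampos : 0 < lam)
    -- (D1)
    (hD1 : ∀ k, Tendsto (fun n => (nSk n k : ℝ) / (nS n : ℝ)) atTop (𝓝 (p k)))
    -- (D2)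
    (hD2 : ∀ ε : ℝ, 0 < ε → ∃ M : ℕ, ∀ n,
      (∑' k : ℕ, if M < k then (k : ℝ) ^ 3 * (nSk n k : ℝ) else 0) / (nS n : ℝ) < ε) :
    -- forward direction: α_n → 0 implies all of the following
    (Tendsto α atTop (𝓝 0) →
      -- ρ_n/β_n = O(1)
      ((fun n => ρ n / β n) =O[atTop] fun _ => (1 : ℝ)) ∧
      -- Σ_k k n_k = O(n_S)
      ((fun n => ∑' k : ℕ, (k : ℝ) * (nk n k : ℝ)) =O[atTop] fun n => (nS n : ℝ)) ∧
      -- Σ_k k n_k/n_S is bounded below by a positive constant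
      (∃ c : ℝ, 0 < c ∧ ∀ᶠ n in atTop,
        c ≤ (∑' k : ℕ, (k : ℝ) * (nk n k : ℝ)) / (nS n : ℝ)) ∧
      -- R₀ → 1
      Tendsto R₀ atTop (𝓝 1) ∧
      -- α_n = (1 + o(1)) λ₂ (R₀ − 1)
      ((fun n => α n - lam2 * (R₀ n - 1)) =o[atTop] fun n => R₀ n - 1) ∧
      -- (R₀ − 1)/α_n is bounded above and below by positive constants
      (∃ c C : ℝ, 0 < c ∧ ∀ᶠ n in atTop,
        c * |α n| ≤ |R₀ n - 1| ∧ |R₀ n - 1| ≤ C * |α n|)) ∧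
    -- converse: R₀ → 1 implies α_n → 0
    (Tendsto R₀ atTop (𝓝 1) → Tendsto α atTop (𝓝 0)) := by
  have hnS : ∀ n, (0 : ℝ) < nS n := fun n => Nat.cast_pos.2 (hnSpos n)
  set T : ℕ → ℝ := fun n => ∑' k : ℕ, (k : ℝ) * (nk n k : ℝ)
  set a : ℕ → ℝ := fun n => (∑' k : ℕ, (k : ℝ) * ((k : ℝ) - 1) * (nSk n k : ℝ)) / nS n
  set Q : ℕ → ℝ := fun n => (1 + ρ n / β n) * T n / nS n
  obtain rfl : α = fun n => a n - Q n := funext fun n => by rw [hα n]; ring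
  obtain rfl : R₀ = fun n => a n / Q n := funext fun n => by
    rw [hR₀ n, basic_reproductive_ratio_eq_div (hnS n).ne' (hβ n).ne']
    simp only [a, Q, T, mul_comm ((_ : ℝ) - 1)]
  have ha : Tendsto a atTop (𝓝 lam2) := hlam2 ▸ tendsto_tsum_mul_div_of_cube_tail nS nSk
    (fun n => support_finite_of_le (hle n) (hfin n)) hD1 hD2 abs_natCast_mul_sub_one_le_pow_three
  have hT_ge : ∀ᶠ n in atTop, lam / 2 ≤ T n / nS n :=
    eventually_le_tsum_mul_div_of_lt nS nSk nk hle hfin (hlam ▸ half_lt_self hlampos) hD1 hD2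
  have hrate : ∀ n, 0 ≤ ρ n / β n := fun n => div_nonneg (hρ n) (hβ n).le
  have hQ_eq : ∀ n, Q n = (1 + ρ n / β n) * (T n / nS n) := fun n => mul_div_assoc _ _ _
  have hQ_ge : ∀ n, T n / nS n ≤ Q n := fun n => (hQ_eq n).symm ▸ le_mul_of_one_le_left
    (div_nonneg (tsum_nonneg fun k => by positivity) (hnS n).le) (le_add_of_nonneg_right (hrate n))
  refine ⟨fun hα0 => ?_, tendsto_sub_of_tendsto_div ha⟩
  have hQ : Tendsto Q atTop (𝓝 lam2) := by simpa using ha.sub hα0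
  have hlam2 : 0 < lam2 := by
    linarith [ge_of_tendsto hQ (hT_ge.mono fun n hn => hn.trans (hQ_ge n))]
  have hQ_le : ∀ᶠ n in atTop, Q n ≤ lam2 + 1 := hQ.eventually (ge_mem_nhds (by linarith))
  have hequiv := isEquivalent_sub_mul_div_sub_one (a := a) hQ hlam2.ne'
  refine ⟨isBigO_one_of_one_add_mul_le (by positivity) hrate hT_ge
    (hQ_le.mono fun n hn => hQ_eq n ▸ hn), ?_, ⟨lam / 2, by positivity, hT_ge⟩,
    div_self hlam2.ne' ▸ ha.div hQ hlam2.ne',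
    hequiv.isLittleO.trans_isBigO (isBigO_const_mul_self _ _ _), ?_⟩
  · refine IsBigO.of_bound (lam2 + 1) (hQ_le.mono fun n hn => ?_)
    rw [Real.norm_of_nonneg (tsum_nonneg fun k => by positivity), Real.norm_of_nonneg (hnS n).le,
      ← div_le_iff₀ (hnS n)]
    exact (hQ_ge n).trans hn
  · simpa only [Real.norm_eq_abs] using (hequiv.isTheta.trans
      ((isTheta_const_mul_left hlam2.ne').2 (isTheta_refl _ _))).exists_pos_bounds

/-- Remark 2.9: under (D1) and (D2), with
`R₀ = (β_n/(ρ_n+β_n)) Σ_k (k−1)k n_S(k) / Σ_k k n_k`: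
if α_n → 0 then ρ_n/β_n = O(1), Σ_k k n_k = O(n_S) with Σ_k k n_k/n_S also
bounded below by a positive constant, R₀ → 1, and
α_n = (1+o(1)) λ₂ (R₀−1), so (R₀−1)/α_n is bounded above and below by positive
constants; conversely, if R₀ → 1 then α_n → 0. -/
theorem basic_reproductive_ratio_vs_alpha
    -- degree data
    (nS : ℕ → ℕ) (hnSpos : ∀ n, 0 < nS n)
    (nSk nk : ℕ → ℕ → ℕ) (hle : ∀ n k, nSk n k ≤ nk n k)
    (hfin : ∀ n, (Function.support (nk n)).Finite)
    (hnS : ∀ n, (nS n : ℝ) = ∑' k : ℕ, (nSk n k : ℝ))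
    -- rates
    (ρ β : ℕ → ℝ) (hρ : ∀ n, 0 ≤ ρ n) (hβ : ∀ n, 0 < β n)
    -- α_n
    (α : ℕ → ℝ)
    (hα : ∀ n, α n =
      -(1 + ρ n / β n) * (∑' k : ℕ, (k : ℝ) * (nk n k : ℝ)) / (nS n : ℝ)
        + (∑' k : ℕ, (k : ℝ) * ((k : ℝ) - 1) * (nSk n k : ℝ)) / (nS n : ℝ))
    -- the basic reproductive ratio R₀
    (R₀ : ℕ → ℝ)
    (hR₀ : ∀ n, R₀ n = β n / (ρ n + β n) *
      ((∑' k : ℕ, ((k : ℝ) - 1) * (k : ℝ) * (nSk n k : ℝ))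
        / ∑' k : ℕ, (k : ℝ) * (nk n k : ℝ)))
    -- limiting degree distribution
    (p : ℕ → ℝ) (hppos : ∀ k, 0 ≤ p k) (hpsum : HasSum p 1)
    (lam lam2 : ℝ)
    (hlam : lam = ∑' k : ℕ, (k : ℝ) * p k)
    (hlam2 : lam2 = ∑' k : ℕ, (k : ℝ) * ((k : ℝ) - 1) * p k)
    (hmean : Summable fun k : ℕ => (k : ℝ) * p k) (hlampos : 0 < lam)
    -- (D1)
    (hD1 : ∀ k, Tendsto (fun n => (nSk n k : ℝ) / (nS n : ℝ)) atTop (𝓝 (p k)))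
    -- (D2)
    (hD2 : ∀ ε : ℝ, 0 < ε → ∃ M : ℕ, ∀ n,
      (∑' k : ℕ, if M < k then (k : ℝ) ^ 3 * (nSk n k : ℝ) else 0) / (nS n : ℝ) < ε) :
    -- forward direction: α_n → 0 implies all of the following
    (Tendsto α atTop (𝓝 0) →
      -- ρ_n/β_n = O(1)
      ((fun n => ρ n / β n) =O[atTop] fun _ => (1 : ℝ)) ∧
      -- Σ_k k n_k = O(n_S)
      ((fun n => ∑' k : ℕ, (k : ℝ) * (nk n k : ℝ)) =O[atTop] fun n => (nS n : ℝ)) ∧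
      -- Σ_k k n_k/n_S is bounded below by a positive constant
      (∃ c : ℝ, 0 < c ∧ ∀ᶠ n in atTop,
        c ≤ (∑' k : ℕ, (k : ℝ) * (nk n k : ℝ)) / (nS n : ℝ)) ∧
      -- R₀ → 1
      Tendsto R₀ atTop (𝓝 1) ∧
      -- α_n = (1 + o(1)) λ₂ (R₀ − 1)
      ((fun n => α n - lam2 * (R₀ n - 1)) =o[atTop] fun n => R₀ n - 1) ∧
      -- (R₀ − 1)/α_n is bounded above and below by positive constants
      (∃ c C : ℝ, 0 < c ∧ ∀ᶠ n in atTop,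
        c * |α n| ≤ |R₀ n - 1| ∧ |R₀ n - 1| ≤ C * |α n|)) ∧
    -- converse: R₀ → 1 implies α_n → 0
    (Tendsto R₀ atTop (𝓝 1) → Tendsto α atTop (𝓝 0)) :=
  basic_reproductive_ratio_vs_alpha_general nS hnSpos nSk nk hle hfin ρ β hρ hβ α hα R₀ hR₀ p lam
    lam2 hlam hlam2 hlampos hD1 hD2
end
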